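/- arXiv:1106.5092 — 9 statements merged into one kernel-verified Lean document; each statement's English description precedes it below -/
import Mathlib

section
/- Let Σ be a set and let X be a set of configurations x : ℤ² → Σ having the diagonal property. Then every configuration in X is determined by any one of its diagonals: for all x, y ∈ X and (i,j) ∈ ℤ², if x_{i+n, j-n} = y_{i+n, j-n} for all n ∈ ℤ, then x = y. -/
/-! Two configurations of `X` agree on a set of cells that is closed under the diagonal rule.
One application of the rule fills in one cell of each of the two neighbouring antidiagonals,
so a set closed under it that contains a whole antidiagonal contains both neighbouring
antidiagonals, and by induction all of `ℤ²`. -/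

namespace DiagonalRule

def IsClosed (A : Set (ℤ × ℤ)) : Prop :=
  ∀ i j : ℤ, (i, j) ∈ A → (i + 1, j - 1) ∈ A → (i, j - 1) ∈ A ∧ (i + 1, j) ∈ A

def antidiag (s : ℤ) : Set (ℤ × ℤ) := {p | p.1 + p.2 = s}

variable {A : Set (ℤ × ℤ)} {s : ℤ}

theorem IsClosed.antidiag_add_one_subset (hA : IsClosed A) (hs : antidiag s ⊆ A) :
    antidiag (s + 1) ⊆ A := by
  rintro ⟨a, b⟩ (hab : a + b = s + 1)
  have hleft : (a - 1, b) ∈ A := hs (show a - 1 + b = s by omega)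
  have hbelow : (a - 1 + 1, b - 1) ∈ A := by
    simpa using hs (show a + (b - 1) = s by omega)
  simpa using (hA _ _ hleft hbelow).2

theorem IsClosed.antidiag_sub_one_subset (hA : IsClosed A) (hs : antidiag s ⊆ A) :
    antidiag (s - 1) ⊆ A := by
  rintro ⟨a, b⟩ (hab : a + b = s - 1)
  have habove : (a, b + 1) ∈ A := hs (show a + (b + 1) = s by omega)
  have hright : (a + 1, b + 1 - 1) ∈ A := by
    simpa using hs (show a + 1 + b = s by omega)
  simpa using (hA _ _ habove hright).1

theorem IsClosed.eq_univ_of_antidiag_subset (hA : IsClosed A) (hs : antidiag s ⊆ A) :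
    A = Set.univ := by
  have hall : ∀ t, antidiag t ⊆ A := fun t =>
    Int.inductionOn' t s hs (fun _ _ => hA.antidiag_add_one_subset)
      (fun _ _ => hA.antidiag_sub_one_subset)
  exact Set.eq_univ_of_forall fun p => hall (p.1 + p.2) rfl

end DiagonalRule

/-- If a set `X` of configurations `ℤ² → Σ` has the diagonal property,
then every configuration in `X` is determined by any one of its diagonals. -/
theorem diagonal_determines_configuration {S : Type*} (X : Set (ℤ × ℤ → S))
    (hdiag : ∀ x ∈ X, ∀ y ∈ X, ∀ i j : ℤ,
      x (i, j) = y (i, j) → x (i + 1, j - 1) = y (i + 1, j - 1) →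
        x (i, j - 1) = y (i, j - 1) ∧ x (i + 1, j) = y (i + 1, j)) :
    ∀ x ∈ X, ∀ y ∈ X, ∀ i j : ℤ,
      (∀ n : ℤ, x (i + n, j - n) = y (i + n, j - n)) → x = y := by
  intro x hx y hy i j h
  have hclosed : DiagonalRule.IsClosed {p | x p = y p} := hdiag x hx y hy
  have hdiagonal : DiagonalRule.antidiag (i + j) ⊆ {p | x p = y p} := by
    rintro ⟨a, b⟩ (hab : a + b = i + j)
    simpa [show i + (a - i) = a by ring, show j - (a - i) = b by omega] using h (a - i)
  have hagree := hclosed.eq_univ_of_antidiag_subset hdiagonal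
  exact funext fun p => Set.eq_univ_iff_forall.mp hagree p
end

section
/- Let ω : ℤ² → Σ_κ be a paved configuration. Then ω ∈ X_{ρ,η}^κ if and only if for all (i,j) ∈ ℤ² and all n, m ≥ 0 the composition ρ_{b(ω_{i+n,j-m})} ∘ ⋯ ∘ ρ_{b(ω_{i+1,j-m})} ∘ ρ_{b(ω_{i,j-m})} ∘ η_{l(ω_{i,j-m})} ∘ ⋯ ∘ η_{l(ω_{i,j-1})} ∘ η_{l(ω_{i,j})} is a nonzero map on A. -/
open scoped Classical

variable (A : Type*) [NormedRing A] [StarRing A] [CStarRing A] [CompleteSpace A]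
  [NormedAlgebra ℂ A] [StarModule ℂ A] [PartialOrder A] [StarOrderedRing A]

/-- A `C*`-symbolic dynamical system `(A, ρ, S)`: a finite family of (central, essential,
faithful) `*`-endomorphisms of a unital `C*`-algebra `A` indexed by a finite alphabet `S`. -/
structure CSDS (S : Type*) [Fintype S] where
  ρ : S → A →⋆ₙₐ[ℂ] A
  unit_ne_zero : ∀ α, ρ α 1 ≠ 0
  central : ∀ α, ∀ x ∈ Set.center A, ρ α x ∈ Set.center A
  essential : 1 ≤ ∑ α, ρ α 1
  faithful : ∀ x : A, x ≠ 0 → ∃ α, ρ α x ≠ 0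

/-- A `C*`-textile dynamical system `(A, ρ, η, Σ^ρ, Σ^η, κ)`. -/
structure CTDS (Sρ Sη : Type*) [Fintype Sρ] [Fintype Sη] where
  rs : CSDS A Sρ
  es : CSDS A Sη
  κ : {p : Sρ × Sη // ∃ x, es.ρ p.2 (rs.ρ p.1 x) ≠ 0} →
      {q : Sη × Sρ // ∃ x, rs.ρ q.2 (es.ρ q.1 x) ≠ 0}
  κ_bij : Function.Bijective κ
  commrel : ∀ p, ∀ x, es.ρ p.1.2 (rs.ρ p.1.1 x) = rs.ρ (κ p).1.2 (es.ρ (κ p).1.1 x)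

variable {A}
variable {Sρ Sη : Type*} [Fintype Sρ] [Fintype Sη]

namespace CTDS

/-- The alphabet `Σ_κ` of the textile system: pairs `(α, b) ∈ Σ^{ρη}`,
identified with quadruples `(α, b, a, β)` with `κ(α,b) = (a,β)`. -/
abbrev SigmaKappa (T : CTDS A Sρ Sη) : Type _ :=
  {p : Sρ × Sη // ∃ x, T.es.ρ p.2 (T.rs.ρ p.1 x) ≠ 0}

variable (T : CTDS A Sρ Sη)

/-- top label `t(ω) = α` -/
def tt (ω : T.SigmaKappa) : Sρ := ω.1.1
/-- right label `r(ω) = b` -/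
def rr (ω : T.SigmaKappa) : Sη := ω.1.2
/-- left label `l(ω) = a` -/
def ll (ω : T.SigmaKappa) : Sη := (T.κ ω).1.1
/-- bottom label `b(ω) = β` -/
def bb (ω : T.SigmaKappa) : Sρ := (T.κ ω).1.2
/-- `δ(ω) = η_b ∘ ρ_α` -/
noncomputable def delta (ω : T.SigmaKappa) : A → A := fun x => T.es.ρ (T.rr ω) (T.rs.ρ (T.tt ω) x)

/-- A configuration `ω : ℤ² → Σ_κ` is paved. -/
def Paved (ω : ℤ × ℤ → T.SigmaKappa) : Prop :=
  ∀ i j : ℤ, T.tt (ω (i, j)) = T.bb (ω (i, j + 1)) ∧ T.rr (ω (i, j)) = T.ll (ω (i + 1, j))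

/-- The diagonal composition `δ(ω_{i+n,j-n}) ∘ ⋯ ∘ δ(ω_{i,j})` (`n+1` factors). -/
noncomputable def diagComp (ω : ℤ × ℤ → T.SigmaKappa) (i j : ℤ) : ℕ → A → A
  | 0 => T.delta (ω (i, j))
  | n + 1 => T.delta (ω (i + (n : ℤ) + 1, j - (n : ℤ) - 1)) ∘ diagComp ω i j n

/-- The two-dimensional subshift `X_{ρ,η}^κ`. -/
def XSet : Set (ℤ × ℤ → T.SigmaKappa) :=
  {ω | T.Paved ω ∧ ∀ (i j : ℤ) (n : ℕ), T.diagComp ω i j (n + 1) ≠ 0}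

/-- The chain `η_{l(ω_{i,j-m})} ∘ ⋯ ∘ η_{l(ω_{i,j-1})} ∘ η_{l(ω_{i,j})}` (`m+1` factors). -/
noncomputable def etaChain (ω : ℤ × ℤ → T.SigmaKappa) (i j : ℤ) : ℕ → A → A
  | 0 => fun x => T.es.ρ (T.ll (ω (i, j))) x
  | m + 1 => (fun x => T.es.ρ (T.ll (ω (i, j - (m : ℤ) - 1))) x) ∘ etaChain ω i j m

/-- The chain `ρ_{b(ω_{i+n,j-m})} ∘ ⋯ ∘ ρ_{b(ω_{i+1,j-m})} ∘ ρ_{b(ω_{i,j-m})}` (`n+1` factors). -/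
noncomputable def rhoChain (ω : ℤ × ℤ → T.SigmaKappa) (i j : ℤ) (m : ℕ) : ℕ → A → A
  | 0 => fun x => T.rs.ρ (T.bb (ω (i, j - (m : ℤ)))) x
  | n + 1 => (fun x => T.rs.ρ (T.bb (ω (i + (n : ℤ) + 1, j - (m : ℤ)))) x) ∘ rhoChain ω i j m n

end CTDS

/-!
On a paved configuration the relation `η_b ∘ ρ_α = ρ_β ∘ η_a` of each tile becomes a commuting
square between neighbouring tiles, so the `η`'s of a column can be pushed through a row of `ρ`'s.
Sliding them along, the diagonal staircase `δ(ω_{i+n,j-n}) ∘ ⋯ ∘ δ(ω_{i,j})` equals the hook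
`ρ ∘ ⋯ ∘ ρ ∘ η ∘ ⋯ ∘ η` with `n = m`. Since every factor maps `0` to `0`, a hook that vanishes
keeps vanishing when it is prolonged; a vanishing hook would thus make the square hook of size
`max n m + 1`, i.e. a staircase, vanish.
-/

lemma comp_eq_zero_of_eq_zero {α M N F : Type*} [Zero M] [Zero N] [FunLike F M N]
    [ZeroHomClass F M N] (f : F) {g : α → M} (hg : g = 0) : ⇑f ∘ g = 0 := by
  subst hg
  funext x
  exact map_zero f

namespace CTDS

variable {T : CTDS A Sρ Sη} {ω : ℤ × ℤ → T.SigmaKappa}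

lemma delta_apply (p : T.SigmaKappa) (x : A) :
    T.delta p x = T.rs.ρ (T.bb p) (T.es.ρ (T.ll p) x) :=
  T.commrel p x

lemma Paved.eta_rho_comm_square (hp : T.Paved ω) (i j : ℤ) (x : A) :
    T.es.ρ (T.ll (ω (i + 1, j))) (T.rs.ρ (T.bb (ω (i, j + 1))) x)
      = T.rs.ρ (T.bb (ω (i, j))) (T.es.ρ (T.ll (ω (i, j))) x) := by
  rw [← (hp i j).1, ← (hp i j).2]
  exact T.commrel (ω (i, j)) x

lemma Paved.eta_rhoChain_comm (hp : T.Paved ω) (i j : ℤ) (m k : ℕ) (x : A) :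
    T.es.ρ (T.ll (ω (i + k + 1, j - m - 1))) (T.rhoChain ω i j m k x)
      = T.rhoChain ω i j (m + 1) k (T.es.ρ (T.ll (ω (i, j - m - 1))) x) := by
  have square (i' : ℤ) := hp.eta_rho_comm_square i' (j - m - 1)
  simp only [sub_add_cancel] at square
  induction k generalizing x with
  | zero => simpa [rhoChain, sub_add_eq_sub_sub] using square i x
  | succ k ih =>
    simp only [rhoChain, Function.comp_apply, Nat.cast_add_one, sub_add_eq_sub_sub,
      ← add_assoc, square, ih]

lemma Paved.diagComp_eq (hp : T.Paved ω) (i j : ℤ) (n : ℕ) :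
    T.diagComp ω i j n = T.rhoChain ω i j n n ∘ T.etaChain ω i j n := by
  induction n with
  | zero =>
    funext x
    simp [diagComp, delta_apply, rhoChain, etaChain]
  | succ n ih =>
    funext x
    simp only [diagComp, rhoChain, etaChain, Function.comp_apply, ih, delta_apply,
      hp.eta_rhoChain_comm, Nat.cast_add_one, sub_add_eq_sub_sub]

lemma Paved.rhoChain_comp_etaChain_succ (hp : T.Paved ω) (i j : ℤ) (n m : ℕ) :
    T.rhoChain ω i j (m + 1) n ∘ T.etaChain ω i j (m + 1)
      = T.es.ρ (T.ll (ω (i + n + 1, j - m - 1)))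
          ∘ (T.rhoChain ω i j m n ∘ T.etaChain ω i j m) := by
  funext x
  simp only [etaChain, Function.comp_apply, hp.eta_rhoChain_comm]

lemma Paved.rhoChain_comp_etaChain_eq_zero_of_le (hp : T.Paved ω) (i j : ℤ)
    {n m n' m' : ℕ} (hn : n ≤ n') (hm : m ≤ m')
    (h : T.rhoChain ω i j m n ∘ T.etaChain ω i j m = 0) :
    T.rhoChain ω i j m' n' ∘ T.etaChain ω i j m' = 0 := by
  induction m', hm using Nat.le_induction with
  | base =>
    induction n', hn using Nat.le_induction with
    | base => exact h
    | succ n' _ ih => exact comp_eq_zero_of_eq_zero (T.rs.ρ _) ih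
  | succ m' _ ih =>
    rw [hp.rhoChain_comp_etaChain_succ]
    exact comp_eq_zero_of_eq_zero (T.es.ρ _) ih

end CTDS

/-- A paved configuration `ω` belongs to `X_{ρ,η}^κ` if and only if all the
compositions `ρ_{b(ω_{i+n,j-m})} ∘ ⋯ ∘ ρ_{b(ω_{i,j-m})} ∘ η_{l(ω_{i,j-m})} ∘ ⋯ ∘ η_{l(ω_{i,j})}`
are nonzero maps on `A`. -/
theorem mem_XSet_iff_chains_ne_zero (T : CTDS A Sρ Sη)
    (ω : ℤ × ℤ → T.SigmaKappa) (hp : T.Paved ω) :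
    ω ∈ T.XSet ↔
      ∀ (i j : ℤ) (n m : ℕ), T.rhoChain ω i j m n ∘ T.etaChain ω i j m ≠ 0 := by
  constructor
  · rintro ⟨-, hdiag⟩ i j n m hzero
    apply hdiag i j (max n m)
    rw [hp.diagComp_eq]
    exact hp.rhoChain_comp_etaChain_eq_zero_of_le i j (by omega) (by omega) hzero
  · intro hchain
    refine ⟨hp, fun i j n => ?_⟩
    rw [hp.diagComp_eq]
    exact hchain i j (n + 1) (n + 1)
end

section
/- The set X_{ρ,η}^κ has the diagonal property: for all configurations x, y ∈ X_{ρ,η}^κ and (i,j) ∈ ℤ², the conditions x_{i,j} = y_{i,j} and x_{i+1,j-1} = y_{i+1,j-1} imply x_{i,j-1} = y_{i,j-1} and x_{i+1,j} = y_{i+1,j}. -/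
open scoped Classical

variable (A : Type*) [NormedRing A] [StarRing A] [CStarRing A] [CompleteSpace A]
  [NormedAlgebra ℂ A] [StarModule ℂ A] [PartialOrder A] [StarOrderedRing A]

variable {A}
variable {Sρ Sη : Type*} [Fintype Sρ] [Fintype Sη]

/-!
A symbol of `Σ_κ` is determined by its top and right labels `(α, b)`, and, since `κ` is
injective, also by its left and bottom labels `(a, β)`. In a paved configuration the top and
right labels of `ω_{i,j-1}` are the bottom label of `ω_{i,j}` and the left label of
`ω_{i+1,j-1}`, while the left and bottom labels of `ω_{i+1,j}` are the right label of `ω_{i,j}`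
and the top label of `ω_{i+1,j-1}`. So the two diagonal symbols determine the other two.
-/

namespace CTDS

omit [CStarRing A] [CompleteSpace A] [StarModule ℂ A] [StarOrderedRing A]

variable {T : CTDS A Sρ Sη}

theorem eq_of_tt_eq_of_rr_eq {ω ω' : T.SigmaKappa} (ht : T.tt ω = T.tt ω')
    (hr : T.rr ω = T.rr ω') : ω = ω' :=
  Subtype.ext (Prod.ext ht hr)

theorem eq_of_ll_eq_of_bb_eq {ω ω' : T.SigmaKappa} (hl : T.ll ω = T.ll ω')
    (hb : T.bb ω = T.bb ω') : ω = ω' :=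
  T.κ_bij.1 (Subtype.ext (Prod.ext hl hb))

namespace Paved

variable {x y : ℤ × ℤ → T.SigmaKappa}

theorem eq_below (hx : T.Paved x) (hy : T.Paved y) {i j : ℤ} (h₁ : x (i, j) = y (i, j))
    (h₂ : x (i + 1, j - 1) = y (i + 1, j - 1)) : x (i, j - 1) = y (i, j - 1) := by
  have hx₁ := (hx i (j - 1)).1
  have hy₁ := (hy i (j - 1)).1
  rw [sub_add_cancel] at hx₁ hy₁
  apply eq_of_tt_eq_of_rr_eq
  · rw [hx₁, hy₁, h₁]
  · rw [(hx i (j - 1)).2, (hy i (j - 1)).2, h₂]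

theorem eq_right (hx : T.Paved x) (hy : T.Paved y) {i j : ℤ} (h₁ : x (i, j) = y (i, j))
    (h₂ : x (i + 1, j - 1) = y (i + 1, j - 1)) : x (i + 1, j) = y (i + 1, j) := by
  have hx₁ := (hx (i + 1) (j - 1)).1
  have hy₁ := (hy (i + 1) (j - 1)).1
  rw [sub_add_cancel] at hx₁ hy₁
  apply eq_of_ll_eq_of_bb_eq
  · rw [← (hx i j).2, ← (hy i j).2, h₁]
  · rw [← hx₁, ← hy₁, h₂]

end Paved

end CTDS

/-- `X_{ρ,η}^κ` has the diagonal property. -/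
theorem XSet_diagonal_property (T : CTDS A Sρ Sη) :
    ∀ x ∈ T.XSet, ∀ y ∈ T.XSet, ∀ i j : ℤ,
      x (i, j) = y (i, j) → x (i + 1, j - 1) = y (i + 1, j - 1) →
        x (i, j - 1) = y (i, j - 1) ∧ x (i + 1, j) = y (i + 1, j) := by
  rintro x ⟨hx, -⟩ y ⟨hy, -⟩ i j h₁ h₂
  exact ⟨hx.eq_below hy h₁ h₂, hx.eq_right hy h₁ h₂⟩
end

section
/- For α ∈ Σ^ρ and a ∈ Σ^η, one has t_a* s_α ≠ 0 if and only if there exist b ∈ Σ^η and β ∈ Σ^ρ such that (α,b) ∈ Σ^{ρη} and κ(α,b) = (a,β). -/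
/-!
The range projections `t_b t_b*` are star projections summing to `1`, hence mutually orthogonal,
so `t_a* t_a' = 0` for `a ≠ a'`. Expanding `t_a* s_α = ∑_b t_a* (s_α t_b) t_b*` and replacing
`s_α t_b` by `t_a' s_β'` where `κ(α,b) = (a',β')` kills every term with `a' ≠ a`; the terms with
`(α,b) ∉ Σ^{ρη}` vanish because `(s_α t_b)* (s_α t_b) = π(η_b(ρ_α(1)))`. Conversely, if
`κ(α,b) = (a,β)` then `s_α t_b = t_a s_β = t_a t_a* s_α t_b`, which is nonzero by the same identity.
-/

open scoped Classical

variable (A : Type*) [NormedRing A] [StarRing A] [CStarRing A] [CompleteSpace A]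
  [NormedAlgebra ℂ A] [StarModule ℂ A] [PartialOrder A] [StarOrderedRing A]

variable {A}
variable {Sρ Sη : Type*} [Fintype Sρ] [Fintype Sη]

namespace CTDS

variable (T : CTDS A Sρ Sη)


noncomputable instance (T : CTDS A Sρ Sη) : Fintype T.SigmaKappa := Fintype.ofFinite _

end CTDS

variable {B : Type*} [NormedRing B] [StarRing B] [CStarRing B] [CompleteSpace B]
  [NormedAlgebra ℂ B] [StarModule ℂ B]

section Orthogonality

variable {C : Type*}

lemma Finset.sum_star_mul_self_eq_zero_iff [NonUnitalNormedRing C] [StarRing C] [CStarRing C]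
    [PartialOrder C] [StarOrderedRing C] {ι : Type*} {s : Finset ι} {x : ι → C} :
    ∑ k ∈ s, star (x k) * x k = 0 ↔ ∀ k ∈ s, x k = 0 := by
  rw [Finset.sum_eq_zero_iff_of_nonneg fun k _ => star_mul_self_nonneg (x k)]
  simp only [CStarRing.star_mul_self_eq_zero_iff]

lemma IsStarProjection.mul_eq_zero_of_sum_eq_one [NormedRing C] [StarRing C] [CStarRing C]
    [PartialOrder C] [StarOrderedRing C] {ι : Type*} [Fintype ι] {p : ι → C}
    (hp : ∀ i, IsStarProjection (p i)) (hsum : ∑ i, p i = 1) {i j : ι} (hij : i ≠ j) :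
    p i * p j = 0 := by
  have hterm : ∀ k, star (p k * p j) * (p k * p j) = p j * p k * p j := fun k => by
    rw [star_mul, (hp j).isSelfAdjoint.star_eq, (hp k).isSelfAdjoint.star_eq, mul_assoc,
      ← mul_assoc (p k), (hp k).isIdempotentElem.eq, mul_assoc]
  have htotal : ∑ k, star (p k * p j) * (p k * p j) = p j := by
    simp only [hterm, ← Finset.sum_mul, ← Finset.mul_sum, hsum, mul_one,
      (hp j).isIdempotentElem.eq]
  have hjj : star (p j * p j) * (p j * p j) = p j := by
    rw [hterm, (hp j).isIdempotentElem.eq, (hp j).isIdempotentElem.eq]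
  rw [← Finset.add_sum_erase _ _ (Finset.mem_univ j), hjj, add_eq_left] at htotal
  exact Finset.sum_star_mul_self_eq_zero_iff.mp htotal i
    (Finset.mem_erase.mpr ⟨hij, Finset.mem_univ i⟩)

lemma isStarProjection_mul_star_self [Semigroup C] [StarMul C] {t : C}
    (ht : t * star t * t = t) : IsStarProjection (t * star t) where
  isIdempotentElem := by rw [IsIdempotentElem, ← mul_assoc, ht]
  isSelfAdjoint := by rw [IsSelfAdjoint, star_mul, star_star]

lemma star_mul_eq_zero_of_sum_mul_star_eq_one [NormedRing C] [StarRing C] [CStarRing C]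
    [CompleteSpace C] [NormedAlgebra ℂ C] [StarModule ℂ C] {ι : Type*} [Fintype ι] {t : ι → C}
    (ht : ∀ i, t i * star (t i) * t i = t i) (hsum : ∑ i, t i * star (t i) = 1)
    {i j : ι} (hij : i ≠ j) : star (t i) * t j = 0 := by
  -- `C` has no order of its own; in the `C⋆`-order a vanishing sum of positives
  -- vanishes termwise.
  let : CStarAlgebra C :=
    { ‹NormedRing C›, ‹StarRing C›, ‹CStarRing C›, ‹NormedAlgebra ℂ C›, ‹StarModule ℂ C›,
      ‹CompleteSpace C› with }
  let := CStarAlgebra.spectralOrder C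
  have := CStarAlgebra.spectralOrderedRing C
  have hproj : (t i * star (t i)) * (t j * star (t j)) = 0 :=
    IsStarProjection.mul_eq_zero_of_sum_eq_one (fun k => isStarProjection_mul_star_self (ht k))
      hsum hij
  have hi : star (t i) * t i * star (t i) = star (t i) := by
    simpa only [star_mul, star_star, mul_assoc] using congrArg star (ht i)
  calc star (t i) * t j = star (t i) * t i * star (t i) * (t j * star (t j) * t j) := by
        rw [hi, ht j]
    _ = star (t i) * ((t i * star (t i)) * (t j * star (t j))) * t j := by
        simp only [mul_assoc]
    _ = 0 := by rw [hproj, mul_zero, zero_mul]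

end Orthogonality

lemma MulHom.exists_ne_zero_iff_map_one_ne_zero {R S : Type*} [MulOneClass R] [MulZeroClass S]
    (f : R →ₙ* S) : (∃ x, f x ≠ 0) ↔ f 1 ≠ 0 := by
  refine ⟨fun ⟨x, hx⟩ h1 => hx ?_, fun h1 => ⟨1, h1⟩⟩
  rw [← mul_one x, map_mul, h1, mul_zero]

lemma mul_eq_zero_of_star_mul_eq_zero {R : Type*} [SemigroupWithZero R] [Star R]
    {x y u v : R} (hu : u * star u * u = u) (h : x * y = u * v) (h0 : star u * x = 0) :
    x * y = 0 :=
  calc x * y = u * star u * (u * v) := by rw [h, ← mul_assoc, hu]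
    _ = u * (star u * x) * y := by rw [← h]; simp only [mul_assoc]
    _ = 0 := by rw [h0, mul_zero, zero_mul]

lemma mul_ne_zero_iff_of_star_mul_mul_eq {R E F M : Type*} [Semiring R] [NormedRing E]
    [StarRing E] [CStarRing E] [FunLike F R E] [RingHomClass F R E] [FunLike M R R]
    [MulHomClass M R R] {π : F} (hπ : Function.Injective π) {u v : E} {φ ψ : M}
    (hu : ∀ x, star u * π x * u = π (φ x)) (hv : ∀ x, star v * π x * v = π (ψ x)) :
    u * v ≠ 0 ↔ ∃ x, ψ (φ x) ≠ 0 := by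
  have hstar : star (u * v) * (u * v) = π (ψ (φ 1)) := by
    rw [← hv, ← hu, map_one, mul_one, star_mul, mul_assoc, mul_assoc, mul_assoc]
  rw [Ne, ← CStarRing.star_mul_self_eq_zero_iff, hstar, map_eq_zero_iff π hπ]
  exact ((ψ : R →ₙ* R).comp (φ : R →ₙ* R)).exists_ne_zero_iff_map_one_ne_zero.symm

theorem tStar_mul_s_ne_zero_iff_general
    (T : CTDS A Sρ Sη)
    (π : A →⋆ₐ[ℂ] B) (hπ : Function.Injective π)
    (s : Sρ → B) (t : Sη → B)
    (htpi : ∀ a, t a * star (t a) * t a = t a)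
    (hs3 : ∀ (x : A) (α : Sρ), star (s α) * π x * s α = π (T.rs.ρ α x))
    (ht1 : ∑ b, t b * star (t b) = 1)
    (ht3 : ∀ (x : A) (a : Sη), star (t a) * π x * t a = π (T.es.ρ a x))
    (hst : ∀ p : T.SigmaKappa, s p.1.1 * t p.1.2 = t (T.κ p).1.1 * s (T.κ p).1.2)
    (α : Sρ) (a : Sη) :
    star (t a) * s α ≠ 0 ↔
      ∃ (b : Sη) (β : Sρ) (h : ∃ x, T.es.ρ b (T.rs.ρ α x) ≠ 0),
        (T.κ ⟨(α, b), h⟩).1 = (a, β) := by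
  have hst_ne : ∀ b, s α * t b ≠ 0 ↔ ∃ x, T.es.ρ b (T.rs.ρ α x) ≠ 0 := fun b =>
    mul_ne_zero_iff_of_star_mul_mul_eq hπ (hs3 · α) (ht3 · b)
  constructor
  · intro hne
    by_contra! hκ
    have hexpand : star (t a) * s α = ∑ b, star (t a) * (s α * t b) * star (t b) := by
      simp only [mul_assoc, ← Finset.mul_sum, ht1, mul_one]
    refine hne (hexpand.trans (Finset.sum_eq_zero fun b _ => ?_))
    by_cases hb : ∃ x, T.es.ρ b (T.rs.ρ α x) ≠ 0
    · have ha : a ≠ (T.κ ⟨(α, b), hb⟩).1.1 := fun h => hκ b _ hb (Prod.ext h.symm rfl)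
      rw [hst ⟨(α, b), hb⟩, ← mul_assoc, star_mul_eq_zero_of_sum_mul_star_eq_one htpi ht1 ha,
        zero_mul, zero_mul]
    · rw [not_not.mp (mt (hst_ne b).mp hb), mul_zero, zero_mul]
  · rintro ⟨b, β, hb, hκ⟩ h0
    have hcomm : s α * t b = t a * s β := by rw [hst ⟨(α, b), hb⟩, hκ]
    exact (hst_ne b).mpr hb (mul_eq_zero_of_star_mul_eq_zero (htpi a) hcomm h0)

/-- `t_a* s_α ≠ 0` iff there are `b, β` with `(α,b) ∈ Σ^{ρη}` and
`κ(α,b) = (a,β)`. -/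
theorem tStar_mul_s_ne_zero_iff
    (T : CTDS A Sρ Sη)
    (π : A →⋆ₐ[ℂ] B) (hπ : Function.Injective π)
    (s : Sρ → B) (t : Sη → B)
    (hspi : ∀ α, s α * star (s α) * s α = s α)
    (htpi : ∀ a, t a * star (t a) * t a = t a)
    (hs1 : ∑ β, s β * star (s β) = 1)
    (hs2 : ∀ (x : A) (α : Sρ), π x * (s α * star (s α)) = s α * star (s α) * π x)
    (hs3 : ∀ (x : A) (α : Sρ), star (s α) * π x * s α = π (T.rs.ρ α x))
    (ht1 : ∑ b, t b * star (t b) = 1)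
    (ht2 : ∀ (x : A) (a : Sη), π x * (t a * star (t a)) = t a * star (t a) * π x)
    (ht3 : ∀ (x : A) (a : Sη), star (t a) * π x * t a = π (T.es.ρ a x))
    (hst : ∀ p : T.SigmaKappa, s p.1.1 * t p.1.2 = t (T.κ p).1.1 * s (T.κ p).1.2)
    (α : Sρ) (a : Sη) :
    star (t a) * s α ≠ 0 ↔
      ∃ (b : Sη) (β : Sρ) (h : ∃ x, T.es.ρ b (T.rs.ρ α x) ≠ 0),
        (T.κ ⟨(α, b), h⟩).1 = (a, β) :=
  tStar_mul_s_ne_zero_iff_general T π hπ s t htpi hs3 ht1 ht3 hst α a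
end

section
/- Suppose in addition that A is commutative. Then the C*-subalgebra of B generated by the set {s_μ t_ζ π(x) t_ζ* s_μ* : μ a finite word over Σ^ρ, ζ a finite word over Σ^η, x ∈ A} is commutative. -/
open scoped Classical

variable (A : Type*) [NormedRing A] [StarRing A] [CStarRing A] [CompleteSpace A]
  [NormedAlgebra ℂ A] [StarModule ℂ A] [PartialOrder A] [StarOrderedRing A]

variable {A}
variable {Sρ Sη : Type*} [Fintype Sρ] [Fintype Sη]

variable {B : Type*} [NormedRing B] [StarRing B] [CStarRing B] [CompleteSpace B]
  [NormedAlgebra ℂ B] [StarModule ℂ B]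

/-
Write `W = s_μ t_ζ`, so that the generators are `W π(x) W*`. The relations give
`π(x) = ∑_β s_β π(ρ_β x) s_β* = ∑_b t_b π(η_b x) t_b*`, and `κ` moves a `t`-word past a letter:
`t_ζ s_β` is `0` or `s_α t_ζ'` with `|ζ'| = |ζ|`. Hence each generator is a finite sum of generators
whose words are one letter longer, and any two generators are sums of generators whose words have
the same lengths `(m, n)`. For such words `W* W' = 0` unless `W = W'`, while `W* W ∈ π(A)`, so these
generators commute because `A` does. The generating set is closed under `*`, hence the closed
`*`-subalgebra it generates lies in its double commutant and is commutative.
-/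

theorem commute_of_mem_addSubmonoidClosure {M : Type*} [Semiring M] {S : Set M}
    (hS : ∀ a ∈ S, ∀ b ∈ S, a * b = b * a) {a b : M} (ha : a ∈ AddSubmonoid.closure S)
    (hb : b ∈ AddSubmonoid.closure S) : Commute a b := by
  have hle : AddSubmonoid.closure S ≤ (Subsemiring.closure S).toAddSubmonoid :=
    AddSubmonoid.closure_le.mpr Subsemiring.subset_closure
  exact Set.centralizer_centralizer_comm_of_comm hS _
    (Subsemiring.closure_le_centralizer_centralizer S (hle ha)) _
    (Subsemiring.closure_le_centralizer_centralizer S (hle hb))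

theorem commute_of_mem_topologicalClosure_adjoin {R D : Type*} [CommSemiring R] [StarRing R]
    [TopologicalSpace D] [Semiring D] [Algebra R D] [StarRing D] [StarModule R D]
    [IsTopologicalSemiring D] [ContinuousStar D] [T2Space D] {G : Set D}
    (hG : ∀ a ∈ G, ∀ b ∈ G, a * b = b * a) (hstar : ∀ a ∈ G, star a ∈ G) {z w : D}
    (hz : z ∈ (StarAlgebra.adjoin R G).topologicalClosure)
    (hw : w ∈ (StarAlgebra.adjoin R G).topologicalClosure) : Commute z w := by
  have hGstar : G ∪ star G = G := Set.union_eq_left.mpr fun a ha => by simpa using hstar _ ha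
  have hle : ∀ {u}, u ∈ (StarAlgebra.adjoin R G).topologicalClosure →
      u ∈ G.centralizer.centralizer := fun hu => by
    rw [← hGstar, ← StarSubalgebra.coe_centralizer_centralizer R]
    exact StarSubalgebra.topologicalClosure_adjoin_le_centralizer_centralizer R G hu
  exact Set.centralizer_centralizer_comm_of_comm hG z (hle hz) w (hle hw)

theorem prod_map_mul_eq_zero_or {M ι κ : Type*} [MonoidWithZero M] {s : ι → M} {t : κ → M}
    (hswap : ∀ a i, t a * s i = 0 ∨ ∃ j b, t a * s i = s j * t b) (ζ : List κ) (i : ι) :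
    (ζ.map t).prod * s i = 0 ∨ ∃ (j : ι) (ζ' : List κ),
      ζ'.length = ζ.length ∧ (ζ.map t).prod * s i = s j * (ζ'.map t).prod := by
  induction ζ generalizing i with
  | nil => exact Or.inr ⟨i, [], rfl, by simp⟩
  | cons a ζ ih =>
    rcases ih i with h0 | ⟨j, ζ', hlen, hζ'⟩
    · left
      rw [List.map_cons, List.prod_cons, mul_assoc, h0, mul_zero]
    · rcases hswap a j with h0 | ⟨j', b, hab⟩
      · left
        rw [List.map_cons, List.prod_cons, mul_assoc, hζ', ← mul_assoc, h0, zero_mul]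
      · right
        refine ⟨j', b :: ζ', by simp [hlen], ?_⟩
        rw [List.map_cons, List.prod_cons, mul_assoc, hζ', ← mul_assoc, hab, List.map_cons,
          List.prod_cons, mul_assoc]

section Algebraic

variable {R C D : Type*} [CommSemiring R] [Semiring C] [Algebra R C] [Star C]
  [Semiring D] [Algebra R D] [StarRing D]

theorem commute_conj_of_star_mul_eq_zero {a b : D} (x y : D) (h : star a * b = 0) :
    Commute (a * x * star a) (b * y * star b) := by
  have hba : star b * a = 0 := by simpa using congrArg star h
  have vanish : ∀ {a b : D} (x y : D), star a * b = 0 → a * x * star a * (b * y * star b) = 0 :=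
    fun {a b} x y h => by
      rw [show a * x * star a * (b * y * star b) = a * x * (star a * b) * (y * star b) by
        simp only [mul_assoc], h, mul_zero, zero_mul]
  rw [Commute, SemiconjBy, vanish x y h, vanish y x hba]

variable (π : C →⋆ₐ[R] D)

theorem commute_conj_self (hC : ∀ x y : C, x * y = y * x) {a : D} {c : C}
    (hc : star a * a = π c) (x y : C) :
    Commute (a * π x * star a) (a * π y * star a) := by
  have conj_mul : ∀ x y, a * π x * star a * (a * π y * star a) = a * π (x * c * y) * star a := by
    intro x y
    rw [map_mul, map_mul, ← hc]
    simp only [mul_assoc]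
  rw [Commute, SemiconjBy, conj_mul, conj_mul, hC (x * c) y, hC x c, ← mul_assoc y c x]

/-- The relations that `(ρ,η;κ)` impose on each of the families `s` and `t` separately. -/
structure IsCovariantFamily {ι : Type*} [Fintype ι] (v : ι → D) (φ : ι → C → C) : Prop where
  partialIsometry : ∀ i, v i * star (v i) * v i = v i
  sum_range : ∑ i, v i * star (v i) = 1
  commute_range : ∀ x i, π x * (v i * star (v i)) = v i * star (v i) * π x
  compress : ∀ x i, star (v i) * π x * v i = π (φ i x)

namespace IsCovariantFamily

variable {π} {ι : Type*} [Fintype ι] {v : ι → D} {φ : ι → C → C}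
  (hv : IsCovariantFamily π v φ)
include hv

theorem map_mul_eq_mul_map (x : C) (i : ι) : π x * v i = v i * π (φ i x) := by
  calc π x * v i = π x * (v i * star (v i)) * v i := by
        rw [mul_assoc, hv.partialIsometry]
    _ = v i * (star (v i) * π x * v i) := by
        rw [hv.commute_range]; simp only [mul_assoc]
    _ = v i * π (φ i x) := by rw [hv.compress]

theorem map_eq_sum (x : C) : π x = ∑ i, v i * π (φ i x) * star (v i) := by
  calc π x = π x * ∑ i, v i * star (v i) := by rw [hv.sum_range, mul_one]
    _ = ∑ i, v i * π (φ i x) * star (v i) := by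
        rw [Finset.mul_sum]
        refine Finset.sum_congr rfl fun i _ => ?_
        rw [← mul_assoc, hv.map_mul_eq_mul_map]

theorem conj_eq_sum (a : D) (x : C) :
    a * π x * star a = ∑ i, (a * v i) * π (φ i x) * star (a * v i) := by
  rw [hv.map_eq_sum x, Finset.mul_sum, Finset.sum_mul]
  refine Finset.sum_congr rfl fun i _ => ?_
  simp only [star_mul, mul_assoc]

end IsCovariantFamily

theorem star_prod_mul_map_mul_prod {ι : Type*} {v : ι → D} {φ : ι → C → C}
    (h : ∀ i j z, star (v i) * π z * v j = if i = j then π (φ i z) else 0) :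
    ∀ {μ ν : List ι}, μ.length = ν.length → ∀ z,
      star (μ.map v).prod * π z * (ν.map v).prod =
        if μ = ν then π (μ.foldl (fun z i => φ i z) z) else 0
  | [], [], _, z => by simp
  | i :: μ, j :: ν, hlen, z => by
    have hrec := star_prod_mul_map_mul_prod h (μ := μ) (ν := ν) (by simpa using hlen)
    calc star ((i :: μ).map v).prod * π z * ((j :: ν).map v).prod
        = star (μ.map v).prod * (star (v i) * π z * v j) * (ν.map v).prod := by
          simp only [List.map_cons, List.prod_cons, star_mul, mul_assoc]
      _ = _ := by
          rw [h]
          by_cases hij : i = j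
          · subst hij; simp [hrec]
          · simp [hij]

section Diagonal

variable {π} {ι κ : Type*} {s : ι → D} {t : κ → D} {φ : ι → C → C} {ψ : κ → C → C}

def diagElem (s : ι → D) (t : κ → D) (π : C →⋆ₐ[R] D) (μ : List ι) (ζ : List κ) (x : C) : D :=
  (μ.map s).prod * (ζ.map t).prod * π x * star ((ζ.map t).prod) * star ((μ.map s).prod)

theorem diagElem_eq_conj (μ : List ι) (ζ : List κ) (x : C) :
    diagElem s t π μ ζ x =
      (μ.map s).prod * (ζ.map t).prod * π x * star ((μ.map s).prod * (ζ.map t).prod) := by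
  rw [diagElem, star_mul, mul_assoc _ (star _)]

theorem star_diagElem (μ : List ι) (ζ : List κ) (x : C) :
    star (diagElem s t π μ ζ x) = diagElem s t π μ ζ (star x) := by
  simp only [diagElem, star_mul, star_star, map_star, mul_assoc]

def diagSpan (s : ι → D) (t : κ → D) (π : C →⋆ₐ[R] D) (m n : ℕ) : AddSubmonoid D :=
  AddSubmonoid.closure {z | ∃ (μ : List ι) (ζ : List κ) (x : C),
    μ.length = m ∧ ζ.length = n ∧ diagElem s t π μ ζ x = z}

theorem diagElem_mem_diagSpan (μ : List ι) (ζ : List κ) (x : C) :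
    diagElem s t π μ ζ x ∈ diagSpan s t π μ.length ζ.length :=
  AddSubmonoid.subset_closure ⟨μ, ζ, x, rfl, rfl, rfl⟩

theorem diagElem_mem_diagSpan_succ_right [Fintype κ] (ht : IsCovariantFamily π t ψ)
    (μ : List ι) (ζ : List κ) (x : C) :
    diagElem s t π μ ζ x ∈ diagSpan s t π μ.length (ζ.length + 1) := by
  rw [diagElem_eq_conj, ht.conj_eq_sum]
  refine AddSubmonoid.sum_mem _ fun b _ => ?_
  convert diagElem_mem_diagSpan (s := s) (t := t) (π := π) μ (ζ ++ [b]) (ψ b x) using 1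
  · simp
  · simp [diagElem, mul_assoc]

theorem diagElem_mem_diagSpan_succ_left [Fintype ι] (hs : IsCovariantFamily π s φ)
    (hswap : ∀ a i, t a * s i = 0 ∨ ∃ j b, t a * s i = s j * t b)
    (μ : List ι) (ζ : List κ) (x : C) :
    diagElem s t π μ ζ x ∈ diagSpan s t π (μ.length + 1) ζ.length := by
  rw [diagElem_eq_conj, hs.conj_eq_sum]
  refine AddSubmonoid.sum_mem _ fun i _ => ?_
  rcases prod_map_mul_eq_zero_or hswap ζ i with h0 | ⟨j, ζ', hlen, hζ'⟩
  · rw [mul_assoc _ _ (s i), h0, mul_zero, zero_mul, zero_mul]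
    exact zero_mem _
  · rw [mul_assoc _ _ (s i), hζ']
    convert diagElem_mem_diagSpan (s := s) (t := t) (π := π) (μ ++ [j]) ζ' (φ i x) using 1
    · simp [hlen]
    · simp [diagElem, mul_assoc]

theorem diagSpan_mono [Fintype ι] [Fintype κ] (hs : IsCovariantFamily π s φ)
    (ht : IsCovariantFamily π t ψ) (hswap : ∀ a i, t a * s i = 0 ∨ ∃ j b, t a * s i = s j * t b)
    {m m' n n' : ℕ} (hm : m ≤ m') (hn : n ≤ n') :
    diagSpan s t π m n ≤ diagSpan s t π m' n' := by
  have mono_left : Monotone fun m => diagSpan s t π m n :=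
    monotone_nat_of_le_succ fun m => AddSubmonoid.closure_le.mpr <| by
      rintro _ ⟨μ, ζ, x, rfl, rfl, rfl⟩
      exact diagElem_mem_diagSpan_succ_left hs hswap μ ζ x
  have mono_right : Monotone fun n => diagSpan s t π m' n :=
    monotone_nat_of_le_succ fun n => AddSubmonoid.closure_le.mpr <| by
      rintro _ ⟨μ, ζ, x, rfl, rfl, rfl⟩
      exact diagElem_mem_diagSpan_succ_right ht μ ζ x
  exact (mono_left hm).trans (mono_right hn)

end Diagonal

end Algebraic

section CStar

theorem mul_eq_zero_of_sum_isStarProjection_eq_one {ι : Type*} [Fintype ι] {p : ι → B}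
    (hp : ∀ i, IsStarProjection (p i)) (hsum : ∑ i, p i = 1) {i j : ι} (hij : i ≠ j) :
    p i * p j = 0 := by
  -- `B` carries no order of its own: positivity is taken in the spectral order.
  let _ : CStarAlgebra B := {}
  let _ := CStarAlgebra.spectralOrder B
  have _ := CStarAlgebra.spectralOrderedRing B
  have hsq : ∀ k, p j * p k * p j = star (p k * p j) * (p k * p j) := fun k => by
    rw [star_mul, (hp j).isSelfAdjoint.star_eq, (hp k).isSelfAdjoint.star_eq, ← mul_assoc,
      mul_assoc (p j) (p k) (p k), (hp k).isIdempotentElem.eq]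
  -- `p j = ∑ₖ p j p k p j = p j + ∑_{k ≠ j} (p k p j)* (p k p j)`, a sum of positive elements.
  have hrest : ∑ k ∈ Finset.univ.erase j, p j * p k * p j = 0 := by
    have hj : p j * p j * p j = p j := by
      rw [(hp j).isIdempotentElem.eq, (hp j).isIdempotentElem.eq]
    have htotal : ∑ k, p j * p k * p j = p j := by
      rw [← Finset.sum_mul, ← Finset.mul_sum, hsum, mul_one, (hp j).isIdempotentElem.eq]
    rw [← Finset.add_sum_erase _ _ (Finset.mem_univ j), hj] at htotal
    exact left_eq_add.mp htotal.symm
  have hij' := (Finset.sum_eq_zero_iff_of_nonneg fun k _ => hsq k ▸ star_mul_self_nonneg _).mp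
    hrest i (Finset.mem_erase.mpr ⟨hij, Finset.mem_univ i⟩)
  rw [hsq] at hij'
  exact (CStarRing.star_mul_self_eq_zero_iff _).mp hij'

variable {C : Type*} [Semiring C] [Algebra ℂ C] [Star C] {π : C →⋆ₐ[ℂ] B}
  {ι κ : Type*} [Fintype ι] [Fintype κ] {s : ι → B} {t : κ → B} {φ : ι → C → C}
  {ψ : κ → C → C}

theorem IsCovariantFamily.star_mul_eq_zero (hs : IsCovariantFamily π s φ) {i j : ι}
    (hij : i ≠ j) : star (s i) * s j = 0 := by
  have hproj : ∀ k, IsStarProjection (s k * star (s k)) := fun k =>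
    ⟨by rw [IsIdempotentElem, ← mul_assoc, hs.partialIsometry],
      by rw [IsSelfAdjoint, star_mul, star_star]⟩
  have hrange : star (s i) * (s i * star (s i)) = star (s i) := by
    simpa [mul_assoc] using congrArg star (hs.partialIsometry i)
  calc star (s i) * s j
      = star (s i) * ((s i * star (s i)) * (s j * star (s j))) * s j := by
        rw [← mul_assoc, hrange, mul_assoc, hs.partialIsometry]
    _ = 0 := by
        rw [mul_eq_zero_of_sum_isStarProjection_eq_one hproj hs.sum_range hij, mul_zero, zero_mul]

theorem IsCovariantFamily.star_mul_map_mul (hs : IsCovariantFamily π s φ) (i j : ι) (z : C) :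
    star (s i) * π z * s j = if i = j then π (φ i z) else 0 := by
  split_ifs with hij
  · rw [hij, hs.compress]
  · rw [mul_assoc, hs.map_mul_eq_mul_map, ← mul_assoc, hs.star_mul_eq_zero hij, zero_mul]

theorem diagElem_commute_of_length_eq (hs : IsCovariantFamily π s φ)
    (ht : IsCovariantFamily π t ψ) (hC : ∀ x y : C, x * y = y * x)
    {μ μ' : List ι} {ζ ζ' : List κ} (hμ : μ.length = μ'.length) (hζ : ζ.length = ζ'.length)
    (x y : C) : Commute (diagElem s t π μ ζ x) (diagElem s t π μ' ζ' y) := by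
  have hcompress :
      star ((μ.map s).prod * (ζ.map t).prod) * ((μ'.map s).prod * (ζ'.map t).prod) =
        if μ = μ' ∧ ζ = ζ' then π (ζ.foldl (fun z a => ψ a z) (μ.foldl (fun z i => φ i z) 1))
        else 0 := by
    rw [star_mul, show star (ζ.map t).prod * star (μ.map s).prod *
          ((μ'.map s).prod * (ζ'.map t).prod) =
        star (ζ.map t).prod * (star (μ.map s).prod * π 1 * (μ'.map s).prod) * (ζ'.map t).prod by
      simp only [map_one, mul_one, mul_assoc],
      star_prod_mul_map_mul_prod π hs.star_mul_map_mul hμ]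
    by_cases hμμ : μ = μ'
    · simp only [hμμ, if_true, true_and, star_prod_mul_map_mul_prod π ht.star_mul_map_mul hζ]
    · simp [hμμ]
  rw [diagElem_eq_conj, diagElem_eq_conj]
  by_cases h : μ = μ' ∧ ζ = ζ'
  · obtain ⟨rfl, rfl⟩ := h
    exact commute_conj_self π hC (by simpa using hcompress) x y
  · exact commute_conj_of_star_mul_eq_zero _ _ (by simpa [h] using hcompress)

theorem diagElem_commute (hs : IsCovariantFamily π s φ) (ht : IsCovariantFamily π t ψ)
    (hswap : ∀ a i, t a * s i = 0 ∨ ∃ j b, t a * s i = s j * t b)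
    (hC : ∀ x y : C, x * y = y * x) (μ μ' : List ι) (ζ ζ' : List κ) (x y : C) :
    Commute (diagElem s t π μ ζ x) (diagElem s t π μ' ζ' y) := by
  refine commute_of_mem_addSubmonoidClosure ?_
    (diagSpan_mono hs ht hswap (le_max_left _ μ'.length) (le_max_left _ ζ'.length)
      (diagElem_mem_diagSpan μ ζ x))
    (diagSpan_mono hs ht hswap (le_max_right μ.length _) (le_max_right ζ.length _)
      (diagElem_mem_diagSpan μ' ζ' y))
  rintro _ ⟨μ₁, ζ₁, x₁, hμ₁, hζ₁, rfl⟩ _ ⟨μ₂, ζ₂, x₂, hμ₂, hζ₂, rfl⟩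
  exact diagElem_commute_of_length_eq hs ht hC (hμ₁.trans hμ₂.symm) (hζ₁.trans hζ₂.symm) x₁ x₂

end CStar

omit [CStarRing A] [CompleteSpace A] [StarModule ℂ A] [StarOrderedRing A] [CompleteSpace B]
  [StarModule ℂ B] in
theorem CTDS.t_mul_s_eq_zero_or {T : CTDS A Sρ Sη} {π : A →⋆ₐ[ℂ] B} {s : Sρ → B} {t : Sη → B}
    (hs : IsCovariantFamily π s fun α => T.rs.ρ α)
    (ht : IsCovariantFamily π t fun a => T.es.ρ a)
    (hst : ∀ p : T.SigmaKappa, s p.1.1 * t p.1.2 = t (T.κ p).1.1 * s (T.κ p).1.2)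
    (a : Sη) (β : Sρ) : t a * s β = 0 ∨ ∃ α b, t a * s β = s α * t b := by
  by_cases hne : ∃ x, T.rs.ρ β (T.es.ρ a x) ≠ 0
  · obtain ⟨p, hp⟩ := T.κ_bij.2 ⟨(a, β), hne⟩
    exact Or.inr ⟨p.1.1, p.1.2, by simpa [hp] using (hst p).symm⟩
  · push Not at hne
    refine Or.inl <| (CStarRing.star_mul_self_eq_zero_iff _).mp ?_
    calc star (t a * s β) * (t a * s β) = star (s β) * (star (t a) * π 1 * t a) * s β := by
          simp only [star_mul, map_one, mul_one, mul_assoc]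
      _ = 0 := by rw [ht.compress, hs.compress, hne, map_zero]

theorem diagonal_subalgebra_commutative_general
    (T : CTDS A Sρ Sη)
    (π : A →⋆ₐ[ℂ] B)
    (s : Sρ → B) (t : Sη → B)
    (hspi : ∀ α, s α * star (s α) * s α = s α)
    (htpi : ∀ a, t a * star (t a) * t a = t a)
    (hs1 : ∑ β, s β * star (s β) = 1)
    (hs2 : ∀ (x : A) (α : Sρ), π x * (s α * star (s α)) = s α * star (s α) * π x)
    (hs3 : ∀ (x : A) (α : Sρ), star (s α) * π x * s α = π (T.rs.ρ α x))
    (ht1 : ∑ b, t b * star (t b) = 1)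
    (ht2 : ∀ (x : A) (a : Sη), π x * (t a * star (t a)) = t a * star (t a) * π x)
    (ht3 : ∀ (x : A) (a : Sη), star (t a) * π x * t a = π (T.es.ρ a x))
    (hst : ∀ p : T.SigmaKappa, s p.1.1 * t p.1.2 = t (T.κ p).1.1 * s (T.κ p).1.2)
    (hA : ∀ x y : A, x * y = y * x) :
    ∀ z ∈ (StarAlgebra.adjoin ℂ
        {z : B | ∃ (μ : List Sρ) (ζ : List Sη) (x : A),
          z = (μ.map s).prod * (ζ.map t).prod * π x *
              star ((ζ.map t).prod) * star ((μ.map s).prod)}).topologicalClosure,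
      ∀ w ∈ (StarAlgebra.adjoin ℂ
        {z : B | ∃ (μ : List Sρ) (ζ : List Sη) (x : A),
          z = (μ.map s).prod * (ζ.map t).prod * π x *
              star ((ζ.map t).prod) * star ((μ.map s).prod)}).topologicalClosure,
        Commute z w := by
  have hs : IsCovariantFamily π s fun α => T.rs.ρ α := ⟨hspi, hs1, hs2, hs3⟩
  have ht : IsCovariantFamily π t fun a => T.es.ρ a := ⟨htpi, ht1, ht2, ht3⟩
  intro z hz w hw
  refine commute_of_mem_topologicalClosure_adjoin ?_ ?_ hz hw
  · rintro _ ⟨μ, ζ, x, rfl⟩ _ ⟨μ', ζ', y, rfl⟩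
    exact diagElem_commute hs ht (CTDS.t_mul_s_eq_zero_or hs ht hst) hA μ μ' ζ ζ' x y
  · rintro _ ⟨μ, ζ, x, rfl⟩
    exact ⟨μ, ζ, star x, star_diagElem μ ζ x⟩

/-- If `A` is commutative then the `C*`-subalgebra of `B` generated by
the elements `s_μ t_ζ π(x) t_ζ* s_μ*` is commutative. -/
theorem diagonal_subalgebra_commutative
    (T : CTDS A Sρ Sη)
    (π : A →⋆ₐ[ℂ] B) (hπ : Function.Injective π)
    (s : Sρ → B) (t : Sη → B)
    (hspi : ∀ α, s α * star (s α) * s α = s α)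
    (htpi : ∀ a, t a * star (t a) * t a = t a)
    (hs1 : ∑ β, s β * star (s β) = 1)
    (hs2 : ∀ (x : A) (α : Sρ), π x * (s α * star (s α)) = s α * star (s α) * π x)
    (hs3 : ∀ (x : A) (α : Sρ), star (s α) * π x * s α = π (T.rs.ρ α x))
    (ht1 : ∑ b, t b * star (t b) = 1)
    (ht2 : ∀ (x : A) (a : Sη), π x * (t a * star (t a)) = t a * star (t a) * π x)
    (ht3 : ∀ (x : A) (a : Sη), star (t a) * π x * t a = π (T.es.ρ a x))
    (hst : ∀ p : T.SigmaKappa, s p.1.1 * t p.1.2 = t (T.κ p).1.1 * s (T.κ p).1.2)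
    (hA : ∀ x y : A, x * y = y * x) :
    ∀ z ∈ (StarAlgebra.adjoin ℂ
        {z : B | ∃ (μ : List Sρ) (ζ : List Sη) (x : A),
          z = (μ.map s).prod * (ζ.map t).prod * π x *
              star ((ζ.map t).prod) * star ((μ.map s).prod)}).topologicalClosure,
      ∀ w ∈ (StarAlgebra.adjoin ℂ
        {z : B | ∃ (μ : List Sρ) (ζ : List Sη) (x : A),
          z = (μ.map s).prod * (ζ.map t).prod * π x *
              star ((ζ.map t).prod) * star ((μ.map s).prod)}).topologicalClosure,
        Commute z w :=
  diagonal_subalgebra_commutative_general T π s t hspi htpi hs1 hs2 hs3 ht1 ht2 ht3 hst hA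
end

section
/- The ℂ-linear span of the set {s_μ t_ζ π(x) t_ξ* s_ν* : μ, ν finite words over Σ^ρ, ζ, ξ finite words over Σ^η, x ∈ A} equals the smallest *-subalgebra of B containing π(A), all s_α (α ∈ Σ^ρ) and all t_a (a ∈ Σ^η); in particular every element of that *-subalgebra is a finite linear combination of elements of the form s_μ t_ζ π(x) t_ξ* s_ν*. -/
/-!
The span `M` of the monomials lies in the `*`-algebra and contains `1`, so it suffices that `M` is
stable under left multiplication by the generators and their adjoints. For `π(A)` this comes from
`π(x) s_α = s_α π(ρ_α(x))`, for `s_α` it is immediate, and `t_a s_μ` is either `0` or of the form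
`s_μ' t_b` thanks to `κ`. For `s_α*` one uses `s_α* s_β = δ_αβ π(ρ_α(1))` (the range projections
sum to `1`, hence are orthogonal); on a monomial starting with `t_ζ` one first inserts
`1 = ∑ s_β s_β*` after `t_ζ` and moves each `s_β` to the front. The case of `t_a*` is the same
argument with the roles of `s` and `t` exchanged, since the monomials `t_ζ s_μ π(x) s_ν* t_ξ*`
span the same space.
-/

open scoped Classical

variable (A : Type*) [NormedRing A] [StarRing A] [CStarRing A] [CompleteSpace A]
  [NormedAlgebra ℂ A] [StarModule ℂ A] [PartialOrder A] [StarOrderedRing A]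

variable {A}
variable {Sρ Sη : Type*} [Fintype Sρ] [Fintype Sη]

variable {B : Type*} [NormedRing B] [StarRing B] [CStarRing B] [CompleteSpace B]
  [NormedAlgebra ℂ B] [StarModule ℂ B]

theorem star_mul_eq_zero_of_sum_mul_star_eq_one_s9 {E ι : Type*} [CStarAlgebra E] [Fintype ι]
    {v : ι → E} (hv : ∀ i, v i * star (v i) * v i = v i) (hsum : ∑ i, v i * star (v i) = 1)
    {i j : ι} (hij : i ≠ j) : star (v i) * v j = 0 := by
  let _ := CStarAlgebra.spectralOrder E
  let _ := CStarAlgebra.spectralOrderedRing E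
  set x : ι → E := fun k => star (v k) * v j
  have hsq : ∀ k, star (x k) * x k = star (v j) * (v k * star (v k)) * v j := by
    simp [x, mul_assoc]
  have htotal : ∑ k, star (x k) * x k = star (v j) * v j := by
    simp_rw [hsq, ← Finset.sum_mul, ← Finset.mul_sum, hsum, mul_one]
  have hdiag : star (x j) * x j = star (v j) * v j := by rw [hsq, mul_assoc, hv]
  rw [← Finset.add_sum_erase _ _ (Finset.mem_univ j), hdiag, add_eq_left] at htotal
  have hxi := (Finset.sum_eq_zero_iff_of_nonneg fun k _ => star_mul_self_nonneg (x k)).mp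
    htotal i (Finset.mem_erase.mpr ⟨hij, Finset.mem_univ i⟩)
  exact (CStarRing.star_mul_self_eq_zero_iff _).mp hxi

section Swaps

variable {M ι ι' : Type*} [MonoidWithZero M]

def MulSwaps (u : ι → M) (v : ι' → M) : Prop :=
  ∀ i j, u i * v j = 0 ∨ ∃ j' i', u i * v j = v j' * u i'

namespace MulSwaps

variable {u : ι → M} {v : ι' → M}

theorem list_prod_mul (h : MulSwaps u v) (μ : List ι) (j : ι') :
    (μ.map u).prod * v j = 0 ∨
      ∃ (j' : ι') (μ' : List ι), (μ.map u).prod * v j = v j' * (μ'.map u).prod := by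
  induction μ generalizing j with
  | nil => exact .inr ⟨j, [], by simp⟩
  | cons i μ ih =>
    rw [List.map_cons, List.prod_cons, mul_assoc]
    rcases ih j with h0 | ⟨j₁, μ₁, h₁⟩
    · exact .inl (by rw [h0, mul_zero])
    rcases h i j₁ with h0 | ⟨j₂, i₂, h₂⟩
    · exact .inl (by rw [h₁, ← mul_assoc, h0, zero_mul])
    · exact .inr ⟨j₂, i₂ :: μ₁, by rw [h₁, ← mul_assoc, h₂]; simp [mul_assoc]⟩

theorem list_prod_mul_list_prod (h : MulSwaps u v) (μ : List ι) (ζ : List ι') :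
    (μ.map u).prod * (ζ.map v).prod = 0 ∨
      ∃ (ζ' : List ι') (μ' : List ι),
        (μ.map u).prod * (ζ.map v).prod = (ζ'.map v).prod * (μ'.map u).prod := by
  induction ζ generalizing μ with
  | nil => exact .inr ⟨[], μ, by simp⟩
  | cons j ζ ih =>
    rw [List.map_cons, List.prod_cons, ← mul_assoc]
    rcases h.list_prod_mul μ j with h0 | ⟨j₁, μ₁, h₁⟩
    · exact .inl (by rw [h0, zero_mul])
    rcases ih μ₁ with h0 | ⟨ζ₂, μ₂, h₂⟩
    · exact .inl (by rw [h₁, mul_assoc, h0, mul_zero])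
    · exact .inr ⟨j₁ :: ζ₂, μ₂, by rw [h₁, mul_assoc, h₂]; simp [mul_assoc]⟩

end MulSwaps

end Swaps

section Covariant

variable {𝕜 R ι ι' : Type*} [CommSemiring 𝕜] [StarRing 𝕜] [Semiring R] [StarRing R]
  [Algebra 𝕜 R] [StarModule 𝕜 R] [Fintype ι]

structure IsCovariantFamily_s9 (D : StarSubalgebra 𝕜 R) (u : ι → R) : Prop where
  mul_star_mul_self : ∀ i, u i * star (u i) * u i = u i
  sum_mul_star : ∑ i, u i * star (u i) = 1
  star_mul_eq_zero : ∀ i j, i ≠ j → star (u i) * u j = 0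
  commute : ∀ c ∈ D, ∀ i, Commute c (u i * star (u i))
  star_mul_mul_mem : ∀ c ∈ D, ∀ i, star (u i) * c * u i ∈ D

namespace IsCovariantFamily_s9

variable {D : StarSubalgebra 𝕜 R} {u : ι → R} {c : R}

theorem mul_eq (hu : IsCovariantFamily_s9 D u) (hc : c ∈ D) (i : ι) :
    c * u i = u i * (star (u i) * c * u i) := by
  calc c * u i = c * (u i * star (u i)) * u i := by rw [mul_assoc, hu.mul_star_mul_self]
    _ = u i * (star (u i) * c * u i) := by rw [(hu.commute c hc i).eq]; simp only [mul_assoc]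

theorem star_mul_eq (hu : IsCovariantFamily_s9 D u) (hc : c ∈ D) (i : ι) :
    star (u i) * c = star (u i) * c * u i * star (u i) := by
  simpa [mul_assoc] using congrArg star (hu.mul_eq (star_mem hc) i)

theorem exists_mul_list_prod_eq (hu : IsCovariantFamily_s9 D u) (hc : c ∈ D) (μ : List ι) :
    ∃ c' ∈ D, c * (μ.map u).prod = (μ.map u).prod * c' := by
  induction μ generalizing c with
  | nil => exact ⟨c, hc, by simp⟩
  | cons i μ ih =>
    obtain ⟨c', hc', h⟩ := ih (hu.star_mul_mul_mem c hc i)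
    exact ⟨c', hc', by rw [List.map_cons, List.prod_cons, ← mul_assoc, hu.mul_eq hc, mul_assoc,
      h, mul_assoc]⟩

theorem star_mul_mem (hu : IsCovariantFamily_s9 D u) (i j : ι) : star (u i) * u j ∈ D := by
  by_cases h : i = j
  · subst h
    simpa using hu.star_mul_mul_mem 1 (one_mem D) i
  · rw [hu.star_mul_eq_zero i j h]
    exact zero_mem D

end IsCovariantFamily_s9

end Covariant

section Monomials

variable {𝕜 R ι ι' : Type*} [CommSemiring 𝕜] [StarRing 𝕜] [Semiring R] [StarRing R]
  [Algebra 𝕜 R] [StarModule 𝕜 R]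

def monomials (D : StarSubalgebra 𝕜 R) (u : ι → R) (v : ι' → R) : Set R :=
  {z | ∃ (μ ν : List ι) (ζ ξ : List ι'), ∃ d ∈ D,
    z = (μ.map u).prod * (ζ.map v).prod * d * star ((ξ.map v).prod) * star ((ν.map u).prod)}

variable {D : StarSubalgebra 𝕜 R} {u : ι → R} {v : ι' → R} {m d : R}

theorem zero_mem_monomials : (0 : R) ∈ monomials D u v :=
  ⟨[], [], [], [], 0, zero_mem D, by simp⟩

theorem monomials_range {C : Type*} [Semiring C] [StarRing C] [Algebra 𝕜 C] (π : C →⋆ₐ[𝕜] R) :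
    monomials π.range u v = {z | ∃ (μ ν : List ι) (ζ ξ : List ι') (x : C),
      z = (μ.map u).prod * (ζ.map v).prod * π x * star ((ξ.map v).prod) *
        star ((ν.map u).prod)} := by
  ext z
  constructor
  · rintro ⟨μ, ν, ζ, ξ, _, ⟨x, rfl⟩, rfl⟩
    exact ⟨μ, ν, ζ, ξ, x, rfl⟩
  · rintro ⟨μ, ν, ζ, ξ, x, rfl⟩
    exact ⟨μ, ν, ζ, ξ, π x, ⟨x, rfl⟩, rfl⟩

theorem one_mem_monomials : (1 : R) ∈ monomials D u v :=
  ⟨[], [], [], [], 1, one_mem D, by simp⟩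

theorem monomials_subset_swap (h : MulSwaps u v) : monomials D u v ⊆ monomials D v u := by
  rintro _ ⟨μ, ν, ζ, ξ, d, hd, rfl⟩
  rcases h.list_prod_mul_list_prod μ ζ with h0 | ⟨ζ', μ', h₁⟩
  · rw [h0]
    simpa using zero_mem_monomials
  rcases h.list_prod_mul_list_prod ν ξ with h0 | ⟨ξ', ν', h₂⟩
  · rw [mul_assoc _ (star _), ← star_mul, h0]
    simpa using zero_mem_monomials
  · refine ⟨ζ', ξ', μ', ν', d, hd, ?_⟩
    rw [h₁, mul_assoc _ (star _), ← star_mul, h₂, star_mul]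
    simp only [mul_assoc]

theorem monomials_eq_swap (huv : MulSwaps u v) (hvu : MulSwaps v u) :
    monomials D u v = monomials D v u :=
  (monomials_subset_swap huv).antisymm (monomials_subset_swap hvu)

theorem mul_mem_monomials_left (i : ι) (hm : m ∈ monomials D u v) :
    u i * m ∈ monomials D u v := by
  obtain ⟨μ, ν, ζ, ξ, d, hd, rfl⟩ := hm
  exact ⟨i :: μ, ν, ζ, ξ, d, hd, by simp [mul_assoc]⟩

theorem mul_mem_monomials_of_swap (hvu : MulSwaps v u) (j : ι') (hm : m ∈ monomials D u v) :
    v j * m ∈ monomials D u v := by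
  obtain ⟨μ, ν, ζ, ξ, d, hd, rfl⟩ := hm
  have hswap := hvu.list_prod_mul_list_prod [j] μ
  simp only [List.map_cons, List.map_nil, List.prod_cons, List.prod_nil, mul_one] at hswap
  simp only [← mul_assoc]
  rcases hswap with h0 | ⟨μ', ζ', h₁⟩
  · rw [h0]
    simpa using zero_mem_monomials
  · exact ⟨μ', ν, ζ' ++ ζ, ξ, d, hd, by rw [h₁]; simp [List.prod_append, mul_assoc]⟩

variable [Fintype ι]

theorem exists_list_prod_mul_mul_star_eq (hu : IsCovariantFamily_s9 D u) (hvu : MulSwaps v u)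
    (ζ ξ : List ι') (ν : List ι) (hd : d ∈ D) (k : ι) :
    ∃ k', ∃ m ∈ monomials D u v, (ζ.map v).prod * u k *
      (star (u k) * d * star ((ξ.map v).prod) * star ((ν.map u).prod)) = u k' * m := by
  rw [hu.star_mul_eq hd k, mul_assoc _ (star (u k)), ← star_mul]
  rcases hvu.list_prod_mul ζ k with h0 | ⟨k', ζ', h₁⟩
  · exact ⟨k, 0, zero_mem_monomials, by rw [h0]; simp⟩
  rcases hvu.list_prod_mul ξ k with h0 | ⟨k'', ξ', h₂⟩
  · exact ⟨k, 0, zero_mem_monomials, by rw [h0]; simp⟩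
  refine ⟨k', (ζ'.map v).prod * (star (u k) * d * u k) * star ((ξ'.map v).prod) *
    star (((ν ++ [k'']).map u).prod), ⟨[], ν ++ [k''], ζ', ξ', _, hu.star_mul_mul_mem d hd k,
    by simp⟩, ?_⟩
  rw [h₁, h₂]
  simp [List.prod_append, star_mul, mul_assoc]

variable [Fintype ι'] {c : R}

theorem mul_mem_monomials (hu : IsCovariantFamily_s9 D u) (hv : IsCovariantFamily_s9 D v)
    (hc : c ∈ D) (hm : m ∈ monomials D u v) : c * m ∈ monomials D u v := by
  obtain ⟨μ, ν, ζ, ξ, d, hd, rfl⟩ := hm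
  obtain ⟨c₁, hc₁, h₁⟩ := hu.exists_mul_list_prod_eq hc μ
  obtain ⟨c₂, hc₂, h₂⟩ := hv.exists_mul_list_prod_eq hc₁ ζ
  refine ⟨μ, ν, ζ, ξ, c₂ * d, mul_mem hc₂ hd, ?_⟩
  simp only [← mul_assoc, h₁]
  rw [mul_assoc _ c₁, h₂]
  simp only [mul_assoc]

theorem star_mul_mem_span_monomials (hu : IsCovariantFamily_s9 D u) (hv : IsCovariantFamily_s9 D v)
    (hvu : MulSwaps v u) (i : ι) (hm : m ∈ monomials D u v) :
    star (u i) * m ∈ Submodule.span 𝕜 (monomials D u v) := by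
  have hcons : ∀ k, ∀ m ∈ monomials D u v, star (u i) * (u k * m) ∈ monomials D u v :=
    fun k m hm => by
      rw [← mul_assoc]
      exact mul_mem_monomials hu hv (hu.star_mul_mem i k) hm
  obtain ⟨μ, ν, ζ, ξ, d, hd, rfl⟩ := hm
  cases μ with
  | cons k μ =>
    refine Submodule.subset_span ?_
    convert hcons k _ ⟨μ, ν, ζ, ξ, d, hd, rfl⟩ using 1
    simp [mul_assoc]
  | nil =>
    -- each summand starts with a letter of `u`, which is the `cons` case
    have hsplit : (([] : List ι).map u).prod * (ζ.map v).prod * d * star ((ξ.map v).prod) *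
        star ((ν.map u).prod) = ∑ k, (ζ.map v).prod * u k *
          (star (u k) * d * star ((ξ.map v).prod) * star ((ν.map u).prod)) := by
      calc _ = (ζ.map v).prod * (∑ k, u k * star (u k)) *
            (d * star ((ξ.map v).prod) * star ((ν.map u).prod)) := by
            rw [hu.sum_mul_star]; simp [mul_assoc]
        _ = _ := by rw [Finset.mul_sum, Finset.sum_mul]; simp only [mul_assoc]
    rw [hsplit, Finset.mul_sum]
    refine Submodule.sum_mem _ fun k _ => ?_
    obtain ⟨k', m', hm', h⟩ := exists_list_prod_mul_mul_star_eq hu hvu ζ ξ ν hd k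
    rw [h]
    exact Submodule.subset_span (hcons k' m' hm')

theorem mul_mem_span_monomials (hu : IsCovariantFamily_s9 D u) (hv : IsCovariantFamily_s9 D v)
    (huv : MulSwaps u v) (hvu : MulSwaps v u) {g : R}
    (hg : g ∈ ((D : Set R) ∪ Set.range u ∪ Set.range v) ∪
      star ((D : Set R) ∪ Set.range u ∪ Set.range v))
    (hm : m ∈ monomials D u v) : g * m ∈ Submodule.span 𝕜 (monomials D u v) := by
  rcases hg with ((hg | ⟨i, rfl⟩) | ⟨j, rfl⟩) | ((hg | ⟨i, hi⟩) | ⟨j, hj⟩)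
  · exact Submodule.subset_span (mul_mem_monomials hu hv hg hm)
  · exact Submodule.subset_span (mul_mem_monomials_left i hm)
  · exact Submodule.subset_span (mul_mem_monomials_of_swap hvu j hm)
  · exact Submodule.subset_span (mul_mem_monomials hu hv (by simpa using star_mem hg) hm)
  · rw [← star_star g, ← hi]
    exact star_mul_mem_span_monomials hu hv hvu i hm
  · rw [← star_star g, ← hj]
    rw [monomials_eq_swap huv hvu] at hm ⊢
    exact star_mul_mem_span_monomials hv hu huv j hm

end Monomials

theorem StarAlgebra.adjoin_subset_span_of_mul_mem {𝕜 R : Type*} [CommSemiring 𝕜] [StarRing 𝕜]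
    [Semiring R] [StarRing R] [Algebra 𝕜 R] [StarModule 𝕜 R] {s T : Set R}
    (h1 : (1 : R) ∈ Submodule.span 𝕜 T)
    (hmul : ∀ g ∈ s ∪ star s, ∀ m ∈ T, g * m ∈ Submodule.span 𝕜 T) :
    (StarAlgebra.adjoin 𝕜 s : Set R) ⊆ Submodule.span 𝕜 T := by
  intro b hb
  suffices ∀ m ∈ Submodule.span 𝕜 T, b * m ∈ Submodule.span 𝕜 T by
    simpa using this 1 h1
  induction (hb : b ∈ Algebra.adjoin 𝕜 (s ∪ star s)) using Algebra.adjoin_induction with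
  | mem g hg =>
    exact fun m hm => Submodule.span_le (p := (Submodule.span 𝕜 T).comap (LinearMap.mulLeft 𝕜 g))
      |>.mpr (hmul g hg) hm
  | algebraMap r =>
    intro m hm
    rw [Algebra.algebraMap_eq_smul_one, smul_mul_assoc, one_mul]
    exact Submodule.smul_mem _ r hm
  | add x y _ _ hx hy =>
    intro m hm
    rw [add_mul]
    exact add_mem (hx m hm) (hy m hm)
  | mul x y _ _ hx hy =>
    intro m hm
    rw [mul_assoc]
    exact hx _ (hy m hm)

theorem span_monomials_eq_adjoin {𝕜 R ι ι' : Type*} [CommSemiring 𝕜] [StarRing 𝕜] [Semiring R]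
    [StarRing R] [Algebra 𝕜 R] [StarModule 𝕜 R] [Fintype ι] [Fintype ι']
    {D : StarSubalgebra 𝕜 R} {u : ι → R} {v : ι' → R}
    (hu : IsCovariantFamily_s9 D u) (hv : IsCovariantFamily_s9 D v)
    (huv : MulSwaps u v) (hvu : MulSwaps v u) :
    (Submodule.span 𝕜 (monomials D u v) : Set R) =
      StarAlgebra.adjoin 𝕜 ((D : Set R) ∪ Set.range u ∪ Set.range v) := by
  set K := StarAlgebra.adjoin 𝕜 ((D : Set R) ∪ Set.range u ∪ Set.range v)
  refine subset_antisymm ?_ (StarAlgebra.adjoin_subset_span_of_mul_mem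
    (Submodule.subset_span one_mem_monomials) fun g hg m hm =>
      mul_mem_span_monomials hu hv huv hvu hg hm)
  have huK (μ : List ι) : (μ.map u).prod ∈ K :=
    list_prod_mem fun _ hx => by
      obtain ⟨i, -, rfl⟩ := List.mem_map.mp hx
      exact StarAlgebra.subset_adjoin 𝕜 _ (Or.inl (Or.inr ⟨i, rfl⟩))
  have hvK (ζ : List ι') : (ζ.map v).prod ∈ K :=
    list_prod_mem fun _ hx => by
      obtain ⟨j, -, rfl⟩ := List.mem_map.mp hx
      exact StarAlgebra.subset_adjoin 𝕜 _ (Or.inr ⟨j, rfl⟩)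
  refine Submodule.span_le (p := K.toSubalgebra.toSubmodule) |>.mpr ?_
  rintro _ ⟨μ, ν, ζ, ξ, d, hd, rfl⟩
  have hdK : d ∈ K := StarAlgebra.subset_adjoin 𝕜 _ (.inl (.inl hd))
  change _ ∈ K
  exact mul_mem (mul_mem (mul_mem (mul_mem (huK μ) (hvK ζ)) hdK) (star_mem (hvK ξ)))
    (star_mem (huK ν))

section Representation

variable {C E : Type*} [Semiring C] [StarRing C] [Algebra ℂ C] [CStarAlgebra E]

theorem isCovariantFamily_range {ι : Type*} [Fintype ι] (π : C →⋆ₐ[ℂ] E) {φ : ι → C → C}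
    {u : ι → E} (hu : ∀ i, u i * star (u i) * u i = u i) (hsum : ∑ i, u i * star (u i) = 1)
    (hcomm : ∀ x i, π x * (u i * star (u i)) = u i * star (u i) * π x)
    (hcompress : ∀ x i, star (u i) * π x * u i = π (φ i x)) :
    IsCovariantFamily_s9 π.range u where
  mul_star_mul_self := hu
  sum_mul_star := hsum
  star_mul_eq_zero _ _ hij := star_mul_eq_zero_of_sum_mul_star_eq_one_s9 hu hsum hij
  commute := by
    rintro _ ⟨x, rfl⟩ i
    exact hcomm x i
  star_mul_mul_mem := by
    rintro _ ⟨x, rfl⟩ i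
    exact ⟨φ i x, (hcompress x i).symm⟩

theorem mul_eq_zero_of_comp_apply_one_eq_zero (π : C →⋆ₐ[ℂ] E) {φ ψ : C → C} {v w : E}
    (hv : ∀ x, star v * π x * v = π (φ x)) (hw : ∀ x, star w * π x * w = π (ψ x))
    (h : ψ (φ 1) = 0) : v * w = 0 := by
  have hvv : star v * v = π (φ 1) := by simpa using hv 1
  rw [← CStarRing.star_mul_self_eq_zero_iff, star_mul, mul_assoc, ← mul_assoc (star v), hvv,
    ← mul_assoc, hw, h, map_zero]

end Representation

namespace CTDS

variable {A' E : Type*} [NormedRing A'] [StarRing A'] [NormedAlgebra ℂ A'] [PartialOrder A']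
  [CStarAlgebra E]

theorem mulSwaps_rs_es (T : CTDS A' Sρ Sη) (π : A' →⋆ₐ[ℂ] E) {s : Sρ → E} {t : Sη → E}
    (hs : ∀ (x : A') (α : Sρ), star (s α) * π x * s α = π (T.rs.ρ α x))
    (ht : ∀ (x : A') (a : Sη), star (t a) * π x * t a = π (T.es.ρ a x))
    (hst : ∀ p : T.SigmaKappa, s p.1.1 * t p.1.2 = t (T.κ p).1.1 * s (T.κ p).1.2) :
    MulSwaps s t := by
  intro α b
  by_cases h : ∃ x, T.es.ρ b (T.rs.ρ α x) ≠ 0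
  · exact .inr ⟨_, _, hst ⟨(α, b), h⟩⟩
  · push Not at h
    exact .inl (mul_eq_zero_of_comp_apply_one_eq_zero π (hs · α) (ht · b) (h 1))

theorem mulSwaps_es_rs (T : CTDS A' Sρ Sη) (π : A' →⋆ₐ[ℂ] E) {s : Sρ → E} {t : Sη → E}
    (hs : ∀ (x : A') (α : Sρ), star (s α) * π x * s α = π (T.rs.ρ α x))
    (ht : ∀ (x : A') (a : Sη), star (t a) * π x * t a = π (T.es.ρ a x))
    (hst : ∀ p : T.SigmaKappa, s p.1.1 * t p.1.2 = t (T.κ p).1.1 * s (T.κ p).1.2) :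
    MulSwaps t s := by
  intro a β
  by_cases h : ∃ x, T.rs.ρ β (T.es.ρ a x) ≠ 0
  · obtain ⟨p, hp⟩ := T.κ_bij.2 ⟨(a, β), h⟩
    exact .inr ⟨p.1.1, p.1.2, by rw [hst p, hp]⟩
  · push Not at h
    exact .inl (mul_eq_zero_of_comp_apply_one_eq_zero π (ht · a) (hs · β) (h 1))

end CTDS

theorem span_monomials_eq_starAlgebra_adjoin_general
    (T : CTDS A Sρ Sη)
    (π : A →⋆ₐ[ℂ] B)
    (s : Sρ → B) (t : Sη → B)
    (hspi : ∀ α, s α * star (s α) * s α = s α)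
    (htpi : ∀ a, t a * star (t a) * t a = t a)
    (hs1 : ∑ β, s β * star (s β) = 1)
    (hs2 : ∀ (x : A) (α : Sρ), π x * (s α * star (s α)) = s α * star (s α) * π x)
    (hs3 : ∀ (x : A) (α : Sρ), star (s α) * π x * s α = π (T.rs.ρ α x))
    (ht1 : ∑ b, t b * star (t b) = 1)
    (ht2 : ∀ (x : A) (a : Sη), π x * (t a * star (t a)) = t a * star (t a) * π x)
    (ht3 : ∀ (x : A) (a : Sη), star (t a) * π x * t a = π (T.es.ρ a x))
    (hst : ∀ p : T.SigmaKappa, s p.1.1 * t p.1.2 = t (T.κ p).1.1 * s (T.κ p).1.2)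
    :
    (Submodule.span ℂ
        {z : B | ∃ (μ ν : List Sρ) (ζ ξ : List Sη) (x : A),
          z = (μ.map s).prod * (ζ.map t).prod * π x *
              star ((ξ.map t).prod) * star ((ν.map s).prod)} : Set B)
      = (StarAlgebra.adjoin ℂ (Set.range ⇑π ∪ Set.range s ∪ Set.range t) : Set B) := by
  let _ : CStarAlgebra B := { ‹NormedRing B›, ‹StarRing B›, ‹CStarRing B›, ‹CompleteSpace B›,
    ‹NormedAlgebra ℂ B›, ‹StarModule ℂ B› with }
  rw [← monomials_range]
  exact span_monomials_eq_adjoin (isCovariantFamily_range π hspi hs1 hs2 hs3)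
    (isCovariantFamily_range π htpi ht1 ht2 ht3) (T.mulSwaps_rs_es π hs3 ht3 hst)
    (T.mulSwaps_es_rs π hs3 ht3 hst)

/-- The linear span of the elements `s_μ t_ζ π(x) t_ξ* s_ν*` equals the
smallest `*`-subalgebra of `B` containing `π(A)`, all `s_α` and all `t_a`. -/
theorem span_monomials_eq_starAlgebra_adjoin
    (T : CTDS A Sρ Sη)
    (π : A →⋆ₐ[ℂ] B) (hπ : Function.Injective π)
    (s : Sρ → B) (t : Sη → B)
    (hspi : ∀ α, s α * star (s α) * s α = s α)
    (htpi : ∀ a, t a * star (t a) * t a = t a)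
    (hs1 : ∑ β, s β * star (s β) = 1)
    (hs2 : ∀ (x : A) (α : Sρ), π x * (s α * star (s α)) = s α * star (s α) * π x)
    (hs3 : ∀ (x : A) (α : Sρ), star (s α) * π x * s α = π (T.rs.ρ α x))
    (ht1 : ∑ b, t b * star (t b) = 1)
    (ht2 : ∀ (x : A) (a : Sη), π x * (t a * star (t a)) = t a * star (t a) * π x)
    (ht3 : ∀ (x : A) (a : Sη), star (t a) * π x * t a = π (T.es.ρ a x))
    (hst : ∀ p : T.SigmaKappa, s p.1.1 * t p.1.2 = t (T.κ p).1.1 * s (T.κ p).1.2)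
    :
    (Submodule.span ℂ
        {z : B | ∃ (μ ν : List Sρ) (ζ ξ : List Sη) (x : A),
          z = (μ.map s).prod * (ζ.map t).prod * π x *
              star ((ξ.map t).prod) * star ((ν.map s).prod)} : Set B)
      = (StarAlgebra.adjoin ℂ (Set.range ⇑π ∪ Set.range s ∪ Set.range t) : Set B) :=
  span_monomials_eq_starAlgebra_adjoin_general T π s t hspi htpi hs1 hs2 hs3 ht1 ht2 ht3 hst
end

section
/- Assume the C*-textile dynamical system forms squares, i.e., the closed *-subalgebra of A generated by {ρ_α(1) : α ∈ Σ^ρ} coincides with the closed *-subalgebra of A generated by {η_a(1) : a ∈ Σ^η}. Then for every l ≥ 1, the closed *-subalgebra A_l^ρ of A generated by {ρ_μ(1) : μ a word of length l over Σ^ρ} coincides with the closed *-subalgebra A_l^η of A generated by {η_ξ(1) : ξ a word of length l over Σ^η}. -/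
open scoped Classical

variable (A : Type*) [NormedRing A] [StarRing A] [CStarRing A] [CompleteSpace A]
  [NormedAlgebra ℂ A] [StarModule ℂ A] [PartialOrder A] [StarOrderedRing A]

variable {A}
variable {Sρ Sη : Type*} [Fintype Sρ] [Fintype Sη]

/-- `ρ_μ = ρ_{μ_j} ∘ ⋯ ∘ ρ_{μ_1}` applied to `x`. -/
noncomputable def rhoW (T : CTDS A Sρ Sη) (μ : List Sρ) (x : A) : A :=
  μ.foldl (fun y α => T.rs.ρ α y) x

/-- `η_ζ = η_{ζ_k} ∘ ⋯ ∘ η_{ζ_1}` applied to `x`. -/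
noncomputable def etaW (T : CTDS A Sρ Sη) (ζ : List Sη) (x : A) : A :=
  ζ.foldl (fun y a => T.es.ρ a y) x

/-- The closed `*`-subalgebra `A_l^ρ` of `A` generated by `{ρ_μ(1) : μ ∈ B_l(Λ_ρ)}`. -/
noncomputable def ALrho (T : CTDS A Sρ Sη) (l : ℕ) : StarSubalgebra ℂ A :=
  (StarAlgebra.adjoin ℂ
    {x : A | ∃ μ : Fin l → Sρ, x = rhoW T (List.ofFn μ) 1}).topologicalClosure

/-- The closed `*`-subalgebra `A_l^η` of `A` generated by `{η_ξ(1) : ξ ∈ B_l(Λ_η)}`. -/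
noncomputable def ALeta (T : CTDS A Sρ Sη) (l : ℕ) : StarSubalgebra ℂ A :=
  (StarAlgebra.adjoin ℂ
    {x : A | ∃ ξ : Fin l → Sη, x = etaW T (List.ofFn ξ) 1}).topologicalClosure

/-!
Every `η_ξ(1)` is a projection, and the commutation relations `κ` push a `ρ`-word through an
`η`-letter: `ρ_ν ∘ η_a` is either `0` or `η_b ∘ ρ_ν'` with `|ν'| = |ν|`. Writing
`ρ_{αν}(1) = ρ_ν(ρ_α(1))` and approximating `ρ_α(1) ∈ A_1^ρ = A_1^η` by polynomials in the
`η_a(1)`, induction on the number of `ρ`-letters puts every mixed word `η_ξ(ρ_ν(1))` with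
`|ν| + |ξ| ≤ l` into `A_l^η`. Hence `A_l^ρ ≤ A_l^η`, and exchanging `ρ` and `η` gives the
reverse inclusion.

The induction also produces words `η_ξ(1)` with `|ξ| < l`. Such a projection `p` lies in `A_l^η`
because it is dominated by `s = η_ξ(∑_{|g| = l - |ξ|} η_g(1)) ∈ A_l^η` and acts on `s` as a unit:
then `‖p - s / (‖s‖ + 1)‖ < 1`, and a Neumann series in the corner `pAp` recovers `p` from `s`.
-/

open Filter Topology

theorem mem_of_isIdempotentElem_of_norm_sub_lt_one {R σ : Type*} [NormedRing R] [SetLike σ R]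
    [NonUnitalSubringClass σ R] {S : σ} (hS : IsClosed (S : Set R)) {p z : R}
    (hp : IsIdempotentElem p) (hpz : p * z = z) (hzp : z * p = z) (hz : z ∈ S)
    (hnorm : ‖p - z‖ < 1) : p ∈ S := by
  have hpow_mul : ∀ n, (p - z) ^ (n + 1) * p = (p - z) ^ (n + 1) := fun n => by
    rw [pow_succ, mul_assoc, sub_mul, hp.eq, hzp]
  have hmem : ∀ n, p - (p - z) ^ (n + 1) ∈ S := by
    intro n
    induction n with
    | zero => simpa using hz
    | succ n ih =>
      have hrec : p - (p - z) ^ (n + 2)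
          = z + (p - (p - z) ^ (n + 1)) - (p - (p - z) ^ (n + 1)) * z := by
        rw [pow_succ _ (n + 1), mul_sub, hpow_mul, sub_mul, hpz]
        abel
      rw [hrec]
      exact sub_mem (add_mem hz ih) (mul_mem ih hz)
  have hlim : Tendsto (fun n => p - (p - z) ^ (n + 1)) atTop (𝓝 p) := by
    simpa using ((tendsto_pow_atTop_nhds_zero_of_norm_lt_one hnorm).comp
      (tendsto_add_atTop_nat 1)).const_sub p
  exact hS.mem_of_tendsto hlim (Eventually.of_forall hmem)

section WordHom

variable {R E ι : Type*} [Monoid R] [NonUnitalNonAssocSemiring E] [DistribMulAction R E] [Star E]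
  (ρ : ι → E →⋆ₙₐ[R] E)

def wordHom : List ι → E →⋆ₙₐ[R] E
  | [] => NonUnitalStarAlgHom.id R E
  | a :: L => (wordHom L).comp (ρ a)

@[simp]
theorem wordHom_nil : wordHom ρ [] = NonUnitalStarAlgHom.id R E := rfl

@[simp]
theorem wordHom_cons (a : ι) (L : List ι) : wordHom ρ (a :: L) = (wordHom ρ L).comp (ρ a) := rfl

theorem wordHom_append (L₁ L₂ : List ι) :
    wordHom ρ (L₁ ++ L₂) = (wordHom ρ L₂).comp (wordHom ρ L₁) := by
  induction L₁ with
  | nil => rfl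
  | cons a L ih => rw [List.cons_append, wordHom_cons, ih, wordHom_cons,
      NonUnitalStarAlgHom.comp_assoc]

theorem wordHom_apply (L : List ι) (x : E) :
    wordHom ρ L x = L.foldl (fun y a => ρ a y) x := by
  induction L generalizing x with
  | nil => rfl
  | cons a L ih => exact ih (ρ a x)

end WordHom

section CStarAlgebra

open scoped CStarAlgebra

variable {B : Type*} [CStarAlgebra B]

theorem map_mem_of_mem_topologicalClosure_adjoin (φ : B →⋆ₙₐ[ℂ] B) {s : Set B}
    {S : StarSubalgebra ℂ B} (hS : IsClosed (S : Set B)) (hone : φ 1 ∈ S)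
    (hs : ∀ x ∈ s, φ x ∈ S) {x : B} (hx : x ∈ (StarAlgebra.adjoin ℂ s).topologicalClosure) :
    φ x ∈ S := by
  have hadjoin : Set.MapsTo φ (StarAlgebra.adjoin ℂ s) S := by
    intro y hy
    induction hy using StarAlgebra.adjoin_induction with
    | mem y hy => exact hs y hy
    | algebraMap r => simpa [Algebra.algebraMap_eq_smul_one] using S.smul_mem hone r
    | add y z _ _ hy hz => simpa using add_mem hy hz
    | mul y z _ _ hy hz => simpa using mul_mem hy hz
    | star y _ hy => rw [map_star]; exact star_mem hy
  simpa [hS.closure_eq] using map_mem_closure (map_continuous φ) hx hadjoin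

variable [PartialOrder B] [StarOrderedRing B]

theorem IsStarProjection.norm_sub_smul_lt_one {p s : B} (hp : IsStarProjection p)
    (hps : p * s = s) (hsp : s * p = s) (hle : p ≤ s) :
    ‖p - (‖s‖ + 1)⁻¹ • s‖ < 1 := by
  set k : ℝ := (‖s‖ + 1)⁻¹
  have hk : 0 < k := by positivity
  have hk_one : k ≤ 1 := inv_le_one_of_one_le₀ (by linarith [norm_nonneg s])
  have hk_norm : k * ‖s‖ ≤ 1 := by
    rw [inv_mul_le_iff₀ (by positivity)]
    linarith
  have hs_le : s ≤ ‖s‖ • p := by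
    have h := CStarAlgebra.star_left_conjugate_le_norm_smul (a := p)
      (IsSelfAdjoint.of_nonneg (hp.nonneg.trans hle))
    rwa [hp.isSelfAdjoint.star_eq, hps, hsp, hp.isIdempotentElem.eq] at h
  have hnonneg : 0 ≤ p - k • s := by
    refine sub_nonneg.2 ?_
    calc k • s ≤ k • ‖s‖ • p := smul_le_smul_of_nonneg_left hs_le hk.le
      _ = (k * ‖s‖) • p := smul_smul _ _ _
      _ ≤ p := smul_le_of_le_one_left hp.nonneg hk_norm
  have hle_one : p - k • s ≤ algebraMap ℝ B (1 - k) :=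
    calc p - k • s ≤ p - k • p := sub_le_sub_left (smul_le_smul_of_nonneg_left hle hk.le) p
      _ = (1 - k) • p := by rw [sub_smul, one_smul]
      _ ≤ (1 - k) • 1 := smul_le_smul_of_nonneg_left hp.le_one (by linarith)
      _ = algebraMap ℝ B (1 - k) := (Algebra.algebraMap_eq_smul_one _).symm
  calc ‖p - k • s‖ ≤ 1 - k :=
        (CStarAlgebra.norm_le_iff_le_algebraMap _ (by linarith) hnonneg).2 hle_one
    _ < 1 := by linarith

theorem IsStarProjection.mem_of_le {S : StarSubalgebra ℂ B} (hS : IsClosed (S : Set B))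
    {p s : B} (hp : IsStarProjection p) (hps : p * s = s) (hsp : s * p = s) (hle : p ≤ s)
    (hs : s ∈ S) : p ∈ S := by
  refine mem_of_isIdempotentElem_of_norm_sub_lt_one hS hp.isIdempotentElem
    (by rw [mul_smul_comm, hps]) (by rw [smul_mul_assoc, hsp]) ?_
    (hp.norm_sub_smul_lt_one hps hsp hle)
  rw [← Complex.coe_smul]
  exact S.smul_mem hs _

theorem one_le_sum_wordHom_one {ι : Type*} [Fintype ι] (ρ : ι → B →⋆ₙₐ[ℂ] B)
    (hρ : 1 ≤ ∑ a, ρ a 1) (m : ℕ) : 1 ≤ ∑ g : Fin m → ι, wordHom ρ (List.ofFn g) 1 := by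
  induction m with
  | zero => simp
  | succ m ih =>
    calc (1 : B) ≤ ∑ g : Fin m → ι, wordHom ρ (List.ofFn g) 1 := ih
      _ ≤ ∑ g : Fin m → ι, wordHom ρ (List.ofFn g) (∑ a, ρ a 1) :=
        Finset.sum_le_sum fun g _ => OrderHomClass.mono _ hρ
      _ = ∑ f : ι × (Fin m → ι), wordHom ρ (List.ofFn f.2) (ρ f.1 1) := by
        rw [Fintype.sum_prod_type, Finset.sum_comm]
        simp only [map_sum]
      _ = ∑ g : Fin (m + 1) → ι, wordHom ρ (List.ofFn g) 1 :=
        Fintype.sum_equiv (Fin.consEquiv fun _ => ι) _ _ fun f => by simp [Fin.consEquiv_apply]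

end CStarAlgebra

namespace CTDS

variable {E : Type*} [CStarAlgebra E] [PartialOrder E] (T : CTDS E Sρ Sη)

noncomputable abbrev rhoHom (μ : List Sρ) : E →⋆ₙₐ[ℂ] E := wordHom T.rs.ρ μ

noncomputable abbrev etaHom (ξ : List Sη) : E →⋆ₙₐ[ℂ] E := wordHom T.es.ρ ξ

theorem rhoW_eq_rhoHom (μ : List Sρ) (x : E) : rhoW T μ x = T.rhoHom μ x :=
  (wordHom_apply _ μ x).symm

noncomputable def swap : CTDS E Sη Sρ where
  rs := T.es
  es := T.rs
  κ := (Equiv.ofBijective T.κ T.κ_bij).symm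
  κ_bij := (Equiv.ofBijective T.κ T.κ_bij).symm.bijective
  commrel q x := by
    have h := T.commrel ((Equiv.ofBijective T.κ T.κ_bij).symm q) x
    rw [Equiv.ofBijective_apply_symm_apply T.κ T.κ_bij q] at h
    exact h.symm

theorem rhoHom_one_mem_ALrho (μ : List Sρ) : T.rhoHom μ 1 ∈ ALrho T μ.length :=
  StarSubalgebra.le_topologicalClosure _ <| StarAlgebra.subset_adjoin ℂ _
    ⟨μ.get, by rw [List.ofFn_get, rhoW_eq_rhoHom]⟩

theorem etaHom_one_mem_ALeta (ξ : List Sη) : T.etaHom ξ 1 ∈ ALeta T ξ.length :=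
  T.swap.rhoHom_one_mem_ALrho ξ

theorem rhoHom_comp_eq_zero_or_exists (ν : List Sρ) (a : Sη) :
    (T.rhoHom ν).comp (T.es.ρ a) = 0 ∨
      ∃ (b : Sη) (ν' : List Sρ), ν'.length = ν.length ∧
        (T.rhoHom ν).comp (T.es.ρ a) = (T.es.ρ b).comp (T.rhoHom ν') := by
  induction ν generalizing a with
  | nil => exact Or.inr ⟨a, [], rfl, rfl⟩
  | cons β ν ih =>
    by_cases hne : ∃ x, T.rs.ρ β (T.es.ρ a x) ≠ 0
    · obtain ⟨q, hq⟩ := T.κ_bij.2 ⟨(a, β), hne⟩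
      have hcomm : (T.rs.ρ β).comp (T.es.ρ a) = (T.es.ρ q.1.2).comp (T.rs.ρ q.1.1) := by
        ext x
        simpa [hq] using (T.commrel q x).symm
      have hassoc : (T.rhoHom (β :: ν)).comp (T.es.ρ a)
          = ((T.rhoHom ν).comp (T.es.ρ q.1.2)).comp (T.rs.ρ q.1.1) := by
        rw [rhoHom, wordHom_cons, NonUnitalStarAlgHom.comp_assoc, hcomm,
          NonUnitalStarAlgHom.comp_assoc]
      rcases ih q.1.2 with h0 | ⟨b, ν', hlen, heq⟩
      · left
        rw [hassoc, h0]
        rfl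
      · exact Or.inr ⟨b, q.1.1 :: ν', by simp [hlen], by
          rw [hassoc, heq, rhoHom, rhoHom, wordHom_cons, NonUnitalStarAlgHom.comp_assoc]⟩
    · push Not at hne
      left
      ext x
      simp [hne x]

variable [StarOrderedRing E]

theorem etaHom_one_mem_ALeta_of_length_le {l : ℕ} (ξ : List Sη) (hξ : ξ.length ≤ l) :
    T.etaHom ξ 1 ∈ ALeta T l := by
  set w := ∑ g : Fin (l - ξ.length) → Sη, T.etaHom (List.ofFn g) 1
  refine ((IsStarProjection.one E).map (T.etaHom ξ)).mem_of_le (S := ALeta T l)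
    (StarSubalgebra.isClosed_topologicalClosure _) (s := T.etaHom ξ w)
    (by rw [← map_mul, one_mul]) (by rw [← map_mul, mul_one])
    (OrderHomClass.mono _ (one_le_sum_wordHom_one _ T.es.essential _)) ?_
  rw [map_sum]
  refine sum_mem fun g _ => ?_
  have hlen : (List.ofFn g ++ ξ).length = l := by
    rw [List.length_append, List.length_ofFn]
    omega
  simpa [hlen, etaHom, wordHom_append] using T.etaHom_one_mem_ALeta (List.ofFn g ++ ξ)

theorem etaHom_rhoHom_one_mem_ALeta (hsq : ALrho T 1 = ALeta T 1) {l : ℕ} (ν : List Sρ)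
    (ξ : List Sη) (hlen : ν.length + ξ.length ≤ l) :
    T.etaHom ξ (T.rhoHom ν 1) ∈ ALeta T l := by
  obtain ⟨m, hm⟩ : ∃ m, ν.length = m := ⟨_, rfl⟩
  induction m generalizing ν ξ with
  | zero =>
    rw [List.length_eq_zero_iff.1 hm]
    exact T.etaHom_one_mem_ALeta_of_length_le ξ (by omega)
  | succ m ih =>
    obtain ⟨α, ν, rfl⟩ := List.exists_cons_of_length_eq_add_one hm
    have hν : ν.length = m := by simpa using hm
    have hα : T.rs.ρ α 1 ∈ ALeta T 1 := hsq ▸ T.rhoHom_one_mem_ALrho [α]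
    refine map_mem_of_mem_topologicalClosure_adjoin ((T.etaHom ξ).comp (T.rhoHom ν))
      (StarSubalgebra.isClosed_topologicalClosure _) (ih ν ξ (by omega) hν) ?_ hα
    rintro _ ⟨f, rfl⟩
    have hf : etaW T (List.ofFn f) 1 = T.es.ρ (f 0) 1 := by simp [etaW]
    rw [hf, ← NonUnitalStarAlgHom.comp_apply, NonUnitalStarAlgHom.comp_assoc]
    rcases T.rhoHom_comp_eq_zero_or_exists ν (f 0) with h0 | ⟨b, ν', hν', heq⟩
    · simp [h0]
    · rw [heq]
      exact ih ν' (b :: ξ) (by rw [List.length_cons]; omega) (hν'.trans hν)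

theorem ALrho_le_ALeta (hsq : ALrho T 1 = ALeta T 1) (l : ℕ) : ALrho T l ≤ ALeta T l := by
  refine StarSubalgebra.topologicalClosure_minimal (StarAlgebra.adjoin_le ?_)
    (StarSubalgebra.isClosed_topologicalClosure _)
  rintro _ ⟨μ, rfl⟩
  simpa [rhoW_eq_rhoHom] using T.etaHom_rhoHom_one_mem_ALeta hsq (List.ofFn μ) [] (by simp)

theorem ALrho_eq_ALeta (hsq : ALrho T 1 = ALeta T 1) (l : ℕ) : ALrho T l = ALeta T l :=
  le_antisymm (T.ALrho_le_ALeta hsq l) (T.swap.ALrho_le_ALeta hsq.symm l)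

end CTDS

/-- If the system forms squares, then `A_l^ρ = A_l^η` for every `l ≥ 1`. -/
theorem ALrho_eq_ALeta_of_forms_squares (T : CTDS A Sρ Sη)
    (hsq : ALrho T 1 = ALeta T 1) :
    ∀ l : ℕ, 1 ≤ l → ALrho T l = ALeta T l := by
  let _ : CStarAlgebra A := { ‹NormedRing A›, ‹StarRing A›, ‹CStarRing A›, ‹CompleteSpace A›,
    ‹NormedAlgebra ℂ A›, ‹StarModule ℂ A› with }
  exact fun l _ => T.ALrho_eq_ALeta hsq l
end

section
/- Let G be an additive abelian group, let φ, ψ : G → G be additive endomorphisms with φ ∘ ψ = ψ ∘ φ, and let H be a subgroup of G with φ(H) ⊆ H and ψ(H) ⊆ H. Suppose g ∈ H can be written g = (h₁ − φ(h₁)) + (h₂ − ψ(h₂)) with h₁, h₂ ∈ G, and suppose there exist j, k ≥ 0 such that φ^j(ψ^k(h₁)) ∈ H and φ^j(ψ^k(h₂)) ∈ H. Then g ∈ (id − φ)(H) + (id − ψ)(H), the subgroup of H generated by the images of H under id − φ and id − ψ. -/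
/-!
Put `Φ = φ^j ∘ ψ^k`. Telescoping `x − φ^n x = ∑ (φ^i x − φ(φ^i x))` shows that `x − Φ x` lies in
`(id − φ)(H) + (id − ψ)(H)` for every `x ∈ H`. Since `Φ` commutes with `φ` and `ψ`, it maps
`g = (h₁ − φ h₁) + (h₂ − ψ h₂)` to `(Φ h₁ − φ(Φ h₁)) + (Φ h₂ − ψ(Φ h₂))`, which lies there too
because `Φ h₁, Φ h₂ ∈ H`. Hence so does `g = (g − Φ g) + Φ g`.
-/

open Function

namespace AddSubgroup

variable {G : Type*} [AddCommGroup G]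

theorem sub_iterate_mem_of_sub_mem {f : G → G} {H K : AddSubgroup G} (hf : Set.MapsTo f H H)
    (hK : ∀ x ∈ H, x - f x ∈ K) (n : ℕ) {x : G} (hx : x ∈ H) : x - f^[n] x ∈ K := by
  induction n with
  | zero => simp
  | succ n ih =>
    have hsplit : x - f^[n + 1] x = (x - f^[n] x) + (f^[n] x - f (f^[n] x)) := by
      rw [iterate_succ_apply']; abel
    rw [hsplit]
    exact add_mem ih (hK _ (hf.iterate n hx))

/-- The subgroup `(id − φ)(H) + (id − ψ)(H)`. -/
def sumSubImages (φ ψ : G →+ G) (H : AddSubgroup G) : AddSubgroup G :=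
  closure ({x : G | ∃ h ∈ H, x = h - φ h} ∪ {x : G | ∃ h ∈ H, x = h - ψ h})

section sumSubImages

variable {φ ψ : G →+ G} {H : AddSubgroup G}

theorem sub_left_mem_sumSubImages {h : G} (hh : h ∈ H) : h - φ h ∈ sumSubImages φ ψ H :=
  subset_closure (Or.inl ⟨h, hh, rfl⟩)

theorem sub_right_mem_sumSubImages {h : G} (hh : h ∈ H) : h - ψ h ∈ sumSubImages φ ψ H :=
  subset_closure (Or.inr ⟨h, hh, rfl⟩)

theorem sub_iterate_iterate_mem_sumSubImages (hφ : Set.MapsTo φ H H) (hψ : Set.MapsTo ψ H H)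
    (j k : ℕ) {x : G} (hx : x ∈ H) : x - φ^[j] (ψ^[k] x) ∈ sumSubImages φ ψ H := by
  have hsplit : x - φ^[j] (ψ^[k] x) = (x - ψ^[k] x) + (ψ^[k] x - φ^[j] (ψ^[k] x)) := by abel
  rw [hsplit]
  exact add_mem (sub_iterate_mem_of_sub_mem hψ (fun _ ↦ sub_right_mem_sumSubImages) k hx)
    (sub_iterate_mem_of_sub_mem hφ (fun _ ↦ sub_left_mem_sumSubImages) j (hψ.iterate k hx))

end sumSubImages

end AddSubgroup

theorem AddMonoidHom.iterate_iterate_sub_add_sub {G : Type*} [AddCommGroup G] {φ ψ : G →+ G}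
    (hcomm : Function.Commute ⇑φ ⇑ψ) (j k : ℕ) (h₁ h₂ : G) :
    φ^[j] (ψ^[k] ((h₁ - φ h₁) + (h₂ - ψ h₂))) =
      (φ^[j] (ψ^[k] h₁) - φ (φ^[j] (ψ^[k] h₁))) + (φ^[j] (ψ^[k] h₂) - ψ (φ^[j] (ψ^[k] h₂))) := by
  simp only [iterate_map_add, iterate_map_sub, (hcomm.symm.iterate_left k).eq,
    (hcomm.iterate_left j).eq, (Function.Commute.iterate_self ⇑φ j).eq,
    (Function.Commute.iterate_self ⇑ψ k).eq]

/-- Let `φ, ψ` be commuting additive endomorphisms of an abelian group `G`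
and `H` a subgroup invariant under both. If `g ∈ H` has the form
`g = (h₁ − φ(h₁)) + (h₂ − ψ(h₂))` with `h₁, h₂ ∈ G` and `φ^j(ψ^k(h₁)), φ^j(ψ^k(h₂)) ∈ H` for
some `j, k ≥ 0`, then `g ∈ (id − φ)(H) + (id − ψ)(H)`. -/
theorem mem_sub_images_of_subgroup {G : Type*} [AddCommGroup G] (φ ψ : G →+ G)
    (hcomm : ∀ x : G, φ (ψ x) = ψ (φ x))
    (H : AddSubgroup G) (hφ : ∀ x ∈ H, φ x ∈ H) (hψ : ∀ x ∈ H, ψ x ∈ H)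
    (g : G) (hg : g ∈ H) (h₁ h₂ : G) (hrep : g = (h₁ - φ h₁) + (h₂ - ψ h₂))
    (j k : ℕ) (h₁mem : (⇑φ)^[j] ((⇑ψ)^[k] h₁) ∈ H) (h₂mem : (⇑φ)^[j] ((⇑ψ)^[k] h₂) ∈ H) :
    g ∈ AddSubgroup.closure
        ({x : G | ∃ h ∈ H, x = h - φ h} ∪ {x : G | ∃ h ∈ H, x = h - ψ h}) := by
  change g ∈ AddSubgroup.sumSubImages φ ψ H
  have hsub : g - φ^[j] (ψ^[k] g) ∈ AddSubgroup.sumSubImages φ ψ H :=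
    AddSubgroup.sub_iterate_iterate_mem_sumSubImages hφ hψ j k hg
  have himage : φ^[j] (ψ^[k] g) ∈ AddSubgroup.sumSubImages φ ψ H := by
    rw [hrep, AddMonoidHom.iterate_iterate_sub_add_sub hcomm]
    exact add_mem (AddSubgroup.sub_left_mem_sumSubImages h₁mem)
      (AddSubgroup.sub_right_mem_sumSubImages h₂mem)
  simpa using add_mem hsub himage
end

section
/- Let G be an additive abelian group, let φ, ψ : G → G be additive endomorphisms with φ ∘ ψ = ψ ∘ φ, and let H be a subgroup of G with φ(H) ⊆ H and ψ(H) ⊆ H. Assume that for every g ∈ G there exist j, k ≥ 0 with φ^j(ψ^k(g)) ∈ H. Then the inclusion H ↪ G induces a group isomorphism H / ((id − φ)(H) + (id − ψ)(H)) ≅ G / ((id − φ)(G) + (id − ψ)(G)). -/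
/-!
Let `N_G`, `N_H` be the subgroups generated by the images of `id − φ` and `id − ψ` in `G` and
in `H`, and put `T = φ ∘ ψ`. Modulo `N_G` (resp. `N_H`) the map `T` acts trivially, and since
`φ` and `ψ` commute and preserve `H`, every `g` satisfies `T^n g ∈ H` for all large `n`.
Hence `g ≡ T^n g` lies in the image of `H`, which gives surjectivity. For injectivity, the
elements `x` with `T^n x ∈ N_H` for all large `n` form a subgroup containing the generators of
`N_G`; so `h ∈ H ∩ N_G` gives `h ≡ T^n h ∈ N_H`.
-/

open Filter

section Coinvariants

variable {A B : Type*} [AddCommGroup A] [AddCommGroup B]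

def coinvariantsKer (φ ψ : A →+ A) : AddSubgroup A :=
  AddSubgroup.closure {x | (∃ y, x = y - φ y) ∨ (∃ y, x = y - ψ y)}

namespace coinvariantsKer

variable (φ ψ : A →+ A)

theorem sub_left_mem (x : A) : x - φ x ∈ coinvariantsKer φ ψ :=
  AddSubgroup.subset_closure (Or.inl ⟨x, rfl⟩)

theorem sub_right_mem (x : A) : x - ψ x ∈ coinvariantsKer φ ψ :=
  AddSubgroup.subset_closure (Or.inr ⟨x, rfl⟩)

theorem mk_iterate_comp (n : ℕ) (x : A) :
    (((φ.comp ψ)^[n] x : A) : A ⧸ coinvariantsKer φ ψ) = x := by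
  have hT : Function.Semiconj (QuotientAddGroup.mk : A → A ⧸ coinvariantsKer φ ψ)
      (φ.comp ψ) id := fun y => by
    refine (QuotientAddGroup.eq_iff_sub_mem.2 ?_).symm
    simpa using add_mem (sub_right_mem φ ψ y) (sub_left_mem φ ψ (ψ y))
  simpa using hT.iterate_right n x

theorem le_comap {φ' ψ' : B →+ B} (f : A →+ B) (hφ : ∀ x, f (φ x) = φ' (f x))
    (hψ : ∀ x, f (ψ x) = ψ' (f x)) :
    coinvariantsKer φ ψ ≤ (coinvariantsKer φ' ψ').comap f := by
  refine (AddSubgroup.closure_le _).2 ?_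
  rintro _ (⟨y, rfl⟩ | ⟨y, rfl⟩)
  · simpa [hφ] using sub_left_mem φ' ψ' (f y)
  · simpa [hψ] using sub_right_mem φ' ψ' (f y)

end coinvariantsKer

end Coinvariants

def AddMonoidHom.restrictEnd {G : Type*} [AddCommGroup G] (φ : G →+ G) {H : AddSubgroup G}
    (hφ : ∀ x ∈ H, φ x ∈ H) : H →+ H :=
  (φ.comp H.subtype).codRestrict H fun x => hφ x x.2

section Subgroup

variable {G : Type*} [AddCommGroup G] {φ ψ : G →+ G} {H : AddSubgroup G}

theorem coinvariantsKer_restrictEnd (hφ : ∀ x ∈ H, φ x ∈ H) (hψ : ∀ x ∈ H, ψ x ∈ H) :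
    coinvariantsKer (φ.restrictEnd hφ) (ψ.restrictEnd hψ) =
      AddSubgroup.closure {x : H | (∃ y : H, (x : G) = (y : G) - φ y) ∨
        (∃ y : H, (x : G) = (y : G) - ψ y)} := by
  simp only [coinvariantsKer, Subtype.ext_iff]
  rfl

theorem eventually_iterate_comp_mem (hcomm : Function.Commute φ ψ) (hφ : ∀ x ∈ H, φ x ∈ H)
    (hψ : ∀ x ∈ H, ψ x ∈ H) {g : G} {j k : ℕ} (hg : φ^[j] (ψ^[k] g) ∈ H) :
    ∀ᶠ n in atTop, (φ.comp ψ)^[n] g ∈ H := by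
  refine eventually_atTop.2 ⟨j + k, fun n hn => ?_⟩
  obtain ⟨a, rfl⟩ : ∃ a, n = a + j := ⟨n - j, by omega⟩
  obtain ⟨b, hb⟩ : ∃ b, a + j = b + k := ⟨a + j - k, by omega⟩
  have hT : (φ.comp ψ)^[a + j] g = φ^[a] (ψ^[b] (φ^[j] (ψ^[k] g))) := by
    rw [AddMonoidHom.coe_comp, hcomm.comp_iterate, Function.comp_apply]
    nth_rw 2 [hb]
    rw [Function.iterate_add_apply, Function.iterate_add_apply, (hcomm.iterate_iterate j b).eq]
  have hφH : Set.MapsTo φ H H := fun x hx => hφ x hx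
  have hψH : Set.MapsTo ψ H H := fun x hx => hψ x hx
  rw [hT]
  exact hφH.iterate a (hψH.iterate b hg)

theorem eventually_iterate_comp_mem_map_of_mem_coinvariantsKer (hcomm : Function.Commute φ ψ)
    (hφ : ∀ x ∈ H, φ x ∈ H) (hψ : ∀ x ∈ H, ψ x ∈ H)
    (habs : ∀ g : G, ∃ j k : ℕ, φ^[j] (ψ^[k] g) ∈ H) {x : G} (hx : x ∈ coinvariantsKer φ ψ) :
    ∀ᶠ n in atTop, (φ.comp ψ)^[n] x ∈
      (coinvariantsKer (φ.restrictEnd hφ) (ψ.restrictEnd hψ)).map H.subtype := by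
  set N := coinvariantsKer (φ.restrictEnd hφ) (ψ.restrictEnd hψ)
  have generator (χ : G →+ G) (hTχ : Function.Commute (φ.comp ψ) χ) (hχ : ∀ x ∈ H, χ x ∈ H)
      (hN : ∀ a : H, a - χ.restrictEnd hχ a ∈ N) (y : G) :
      ∀ᶠ n in atTop, (φ.comp ψ)^[n] (y - χ y) ∈ N.map H.subtype := by
    obtain ⟨j, k, hy⟩ := habs y
    filter_upwards [eventually_iterate_comp_mem hcomm hφ hψ hy] with n hn
    rw [iterate_map_sub, (hTχ.iterate_left n).eq]
    exact AddSubgroup.mem_map_of_mem H.subtype (hN ⟨_, hn⟩)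
  induction hx using AddSubgroup.closure_induction with
  | mem x hx =>
    obtain ⟨y, rfl⟩ | ⟨y, rfl⟩ := hx
    · exact generator φ ((Function.Commute.refl φ).comp_left hcomm.symm) hφ
        (coinvariantsKer.sub_left_mem _ _) y
    · exact generator ψ (hcomm.comp_left (Function.Commute.refl ψ)) hψ
        (coinvariantsKer.sub_right_mem _ _) y
  | zero => exact .of_forall fun n => by rw [iterate_map_zero]; exact zero_mem _
  | add x y _ _ hx hy =>
    filter_upwards [hx, hy] with n hx hy
    rw [iterate_map_add]
    exact add_mem hx hy
  | neg x _ hx =>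
    filter_upwards [hx] with n hx
    rw [iterate_map_neg]
    exact neg_mem hx

theorem bijective_quotientMap_subtype (hcomm : Function.Commute φ ψ)
    (hφ : ∀ x ∈ H, φ x ∈ H) (hψ : ∀ x ∈ H, ψ x ∈ H)
    (habs : ∀ g : G, ∃ j k : ℕ, φ^[j] (ψ^[k] g) ∈ H) :
    Function.Bijective (QuotientAddGroup.map _ _ H.subtype
      (coinvariantsKer.le_comap (φ.restrictEnd hφ) (ψ.restrictEnd hψ) H.subtype
        (fun _ => rfl) fun _ => rfl)) := by
  refine ⟨(injective_iff_map_eq_zero _).2 fun q hq => ?_, fun q => ?_⟩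
  · induction q using QuotientAddGroup.induction_on with | H h => ?_
    have hh : (h : G) ∈ coinvariantsKer φ ψ := (QuotientAddGroup.eq_zero_iff _).1 hq
    obtain ⟨n, hn⟩ :=
      (eventually_iterate_comp_mem_map_of_mem_coinvariantsKer hcomm hφ hψ habs hh).exists
    obtain ⟨z, hz, hzh⟩ := AddSubgroup.mem_map.1 hn
    have hcoe : ((((φ.restrictEnd hφ).comp (ψ.restrictEnd hψ))^[n] h : H) : G) =
        (φ.comp ψ)^[n] h :=
      Function.Semiconj.iterate_right (f := Subtype.val) (fun _ => rfl) n h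
    rw [← coinvariantsKer.mk_iterate_comp _ _ n h, QuotientAddGroup.eq_zero_iff,
      ← Subtype.ext (hzh.trans hcoe.symm)]
    exact hz
  · induction q using QuotientAddGroup.induction_on with | H g => ?_
    obtain ⟨j, k, hg⟩ := habs g
    obtain ⟨n, hn⟩ := (eventually_iterate_comp_mem hcomm hφ hψ hg).exists
    exact ⟨(⟨_, hn⟩ : H), coinvariantsKer.mk_iterate_comp φ ψ n g⟩

end Subgroup

/-- Let `φ, ψ` be commuting additive endomorphisms of an abelian group `G`
and `H` a subgroup invariant under both such that every `g ∈ G` satisfies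
`φ^j(ψ^k(g)) ∈ H` for some `j, k ≥ 0`. Then the inclusion `H ↪ G` induces an isomorphism
`H/((id−φ)(H) + (id−ψ)(H)) ≅ G/((id−φ)(G) + (id−ψ)(G))`. -/
theorem quotient_iso_of_eventually_in_subgroup {G : Type*} [AddCommGroup G] (φ ψ : G →+ G)
    (hcomm : ∀ x : G, φ (ψ x) = ψ (φ x))
    (H : AddSubgroup G) (hφ : ∀ x ∈ H, φ x ∈ H) (hψ : ∀ x ∈ H, ψ x ∈ H)
    (habs : ∀ g : G, ∃ j k : ℕ, (⇑φ)^[j] ((⇑ψ)^[k] g) ∈ H) :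
    ∃ e : (H ⧸ (AddSubgroup.closure
            {x : H | (∃ y : H, (x : G) = (y : G) - φ y) ∨
                     (∃ y : H, (x : G) = (y : G) - ψ y)})) ≃+
          (G ⧸ (AddSubgroup.closure
            {x : G | (∃ y : G, x = y - φ y) ∨ (∃ y : G, x = y - ψ y)})),
      ∀ h : H, e (QuotientAddGroup.mk h) = QuotientAddGroup.mk (h : G) := by
  rw [← coinvariantsKer_restrictEnd hφ hψ]
  exact ⟨AddEquiv.ofBijective _ (bijective_quotientMap_subtype hcomm hφ hψ habs), fun _ => rfl⟩
end
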